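/- arXiv:0709.1675 — 9 statements merged into one kernel-verified Lean document; each statement's English description precedes it below -/
import Mathlib

section
/- Let n ≥ 1 and let (V_i)_{i∈ι} be a finite family of n×n complex matrices with purely dissipative Lindblad generator L. Suppose ρ₀ is a positive definite matrix of trace one with L(ρ₀) = 0, and suppose that the commutant of the set {V_i : i ∈ ι} ∪ {V_i† : i ∈ ι} consists exactly of the scalar multiples of the identity. Then ρ₀ is the unique stationary state: every positive semidefinite trace-one matrix ρ with L(ρ) = 0 equals ρ₀. -/
/-!
The Heisenberg-picture generator `L†`, dual to `L` under `(A, X) ↦ tr (A X)`, satisfies the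
dissipation identity `L†(X†X) - X† L†(X) - L†(X†) X = ∑ᵢ [Vᵢ, X]† [Vᵢ, X]`. If `L†(X) = 0`, then
also `L†(X†) = 0`, and pairing the identity with the faithful stationary state `ρ₀` gives
`∑ᵢ tr (ρ₀ [Vᵢ, X]† [Vᵢ, X]) = tr (L(ρ₀) X†X) = 0`, so every `[Vᵢ, X]` vanishes. Hence `ker L†` lies
in the commutant of `{Vᵢ, Vᵢ†}`, the scalars. By duality `ker L` is at most one-dimensional too;
it contains `ρ₀`, and the trace normalisation singles `ρ₀` out.
-/

open Matrix LinearMap Module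
open scoped ComplexOrder

lemma LinearMap.finrank_ker_dualMap {K V : Type*} [Field K] [AddCommGroup V] [Module K V]
    [FiniteDimensional K V] (f : V →ₗ[K] V) : finrank K (ker f.dualMap) = finrank K (ker f) := by
  have h_ann := Subspace.finrank_add_finrank_dualAnnihilator_eq (range f)
  rw [← ker_dualMap_eq_dualAnnihilator_range] at h_ann
  have h_rank := f.finrank_range_add_finrank_ker
  omega

lemma Submodule.eq_of_finrank_le_one {K V : Type*} [Field K] [AddCommGroup V] [Module K V]
    [FiniteDimensional K V] {S : Submodule K V} (hS : finrank K S ≤ 1) (ℓ : V →ₗ[K] K) {x y : V}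
    (hx : x ∈ S) (hy : y ∈ S) (hxy : ℓ x = ℓ y) (hy0 : ℓ y ≠ 0) : x = y := by
  have hy_ne : y ≠ 0 := fun h => hy0 (by rw [h, map_zero])
  have hspan : K ∙ y = S := Submodule.eq_of_le_of_finrank_le
    ((Submodule.span_singleton_le_iff_mem y S).mpr hy) (by rwa [finrank_span_singleton hy_ne])
  obtain ⟨c, rfl⟩ := Submodule.mem_span_singleton.mp (hspan ▸ hx)
  rw [map_smul, smul_eq_mul, mul_eq_right₀ hy0] at hxy
  rw [hxy, one_smul]

namespace Matrix

lemma finrank_ker_le_of_trace_mul_eq {K m : Type*} [Field K] [Fintype m] [DecidableEq m]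
    {f g : Matrix m m K →ₗ[K] Matrix m m K} (h : ∀ A X, (f A * X).trace = (A * g X).trace) :
    finrank K (ker f) ≤ finrank K (ker g) := by
  let φ : Matrix m m K →ₗ[K] Dual K (Matrix m m K) :=
    (LinearMap.mul K (Matrix m m K)).compr₂ (traceLinearMap m K K)
  have hφ : Function.Injective φ := fun A B hAB =>
    ext_iff_trace_mul_right.mpr fun X => LinearMap.congr_fun hAB X
  have hmaps : ∀ A ∈ ker f, φ A ∈ ker g.dualMap := fun A hA => by
    ext X
    rw [mem_ker] at hA
    simp [φ, ← h, hA]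
  calc finrank K (ker f) ≤ finrank K (ker g.dualMap) :=
        finrank_le_finrank_of_injective (f := φ.restrict hmaps) fun A B hAB =>
          Subtype.ext (hφ (congrArg Subtype.val hAB))
    _ = finrank K (ker g) := g.finrank_ker_dualMap

variable {𝕜 m ι : Type*} [RCLike 𝕜] [Fintype m]

lemma PosSemidef.trace_mul_conjTranspose_mul_self_nonneg {ρ : Matrix m m 𝕜} (hρ : ρ.PosSemidef)
    (C : Matrix m m 𝕜) : 0 ≤ (ρ * (Cᴴ * C)).trace := by
  rw [← Matrix.mul_assoc, trace_mul_cycle]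
  exact (hρ.mul_mul_conjTranspose_same C).trace_nonneg

lemma PosDef.trace_mul_conjTranspose_mul_self_eq_zero_iff [DecidableEq m] {ρ : Matrix m m 𝕜}
    (hρ : ρ.PosDef) {C : Matrix m m 𝕜} : (ρ * (Cᴴ * C)).trace = 0 ↔ C = 0 := by
  open scoped MatrixOrder in
  obtain ⟨y, hy, rfl⟩ := CStarAlgebra.isStrictlyPositive_iff_eq_star_mul_self.mp
    hρ.isStrictlyPositive
  refine ⟨fun h => ?_, fun h => by simp [h]⟩
  have hcycle : (star y * y * (Cᴴ * C)).trace = ((y * Cᴴ)ᴴ * (y * Cᴴ)).trace := by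
    rw [conjTranspose_mul, conjTranspose_conjTranspose, star_eq_conjTranspose, Matrix.mul_assoc C,
      trace_mul_comm C]
    simp only [Matrix.mul_assoc]
  rw [hcycle, trace_conjTranspose_mul_self_eq_zero_iff, hy.mul_right_eq_zero,
    conjTranspose_eq_zero] at h
  exact h

variable [Fintype ι]

def lindbladian (V : ι → Matrix m m 𝕜) : Matrix m m 𝕜 →ₗ[𝕜] Matrix m m 𝕜 :=
  ∑ i, (mulLeft 𝕜 (V i) ∘ₗ mulRight 𝕜 (V i)ᴴ
    - (1 / 2 : 𝕜) • (mulLeft 𝕜 ((V i)ᴴ * V i) + mulRight 𝕜 ((V i)ᴴ * V i)))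

/-- The Heisenberg-picture generator `L†`. -/
def lindbladianDual (V : ι → Matrix m m 𝕜) : Matrix m m 𝕜 →ₗ[𝕜] Matrix m m 𝕜 :=
  ∑ i, (mulLeft 𝕜 (V i)ᴴ ∘ₗ mulRight 𝕜 (V i)
    - (1 / 2 : 𝕜) • (mulRight 𝕜 ((V i)ᴴ * V i) + mulLeft 𝕜 ((V i)ᴴ * V i)))

variable (V : ι → Matrix m m 𝕜)

lemma lindbladian_apply (ρ : Matrix m m 𝕜) : lindbladian V ρ =
    ∑ i, (V i * ρ * (V i)ᴴ - (1 / 2 : 𝕜) • ((V i)ᴴ * V i * ρ + ρ * ((V i)ᴴ * V i))) := by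
  simp [lindbladian, Matrix.mul_assoc]

lemma lindbladianDual_apply (X : Matrix m m 𝕜) : lindbladianDual V X =
    ∑ i, ((V i)ᴴ * X * V i - (1 / 2 : 𝕜) • (X * ((V i)ᴴ * V i) + (V i)ᴴ * V i * X)) := by
  simp [lindbladianDual, Matrix.mul_assoc]

lemma trace_lindbladian_mul (A X : Matrix m m 𝕜) :
    (lindbladian V A * X).trace = (A * lindbladianDual V X).trace := by
  simp only [lindbladian_apply, lindbladianDual_apply, Finset.sum_mul, Finset.mul_sum, trace_sum]
  refine Finset.sum_congr rfl fun i _ => ?_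
  simp only [sub_mul, mul_sub, add_mul, mul_add, smul_mul_assoc, mul_smul_comm, trace_sub,
    trace_add, trace_smul, Matrix.mul_assoc]
  rw [trace_mul_comm (V i) (A * ((V i)ᴴ * X)), trace_mul_comm (V i)ᴴ (V i * (A * X))]
  simp only [Matrix.mul_assoc]
  rw [trace_mul_comm (V i) (A * (X * (V i)ᴴ))]
  simp only [Matrix.mul_assoc]

lemma lindbladianDual_conjTranspose (X : Matrix m m 𝕜) :
    lindbladianDual V Xᴴ = (lindbladianDual V X)ᴴ := by
  simp only [lindbladianDual_apply, conjTranspose_sum, conjTranspose_sub, conjTranspose_smul,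
    conjTranspose_add, conjTranspose_mul, conjTranspose_conjTranspose, Matrix.mul_assoc,
    star_div₀, star_one, star_ofNat, add_comm]

lemma lindbladianDual_conjTranspose_mul_self (X : Matrix m m 𝕜) :
    lindbladianDual V (Xᴴ * X) - Xᴴ * lindbladianDual V X - lindbladianDual V Xᴴ * X =
      ∑ i, (V i * X - X * V i)ᴴ * (V i * X - X * V i) := by
  simp only [lindbladianDual_apply, Finset.mul_sum, Finset.sum_mul, ← Finset.sum_sub_distrib]
  refine Finset.sum_congr rfl fun i _ => ?_
  simp only [conjTranspose_sub, conjTranspose_mul]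
  noncomm_ring
  module

variable [DecidableEq m] {V} {ρ : Matrix m m 𝕜}

lemma commute_of_lindbladianDual_eq_zero (hρ : ρ.PosDef) (hρ_st : lindbladian V ρ = 0)
    {X : Matrix m m 𝕜} (hX : lindbladianDual V X = 0) (i : ι) : Commute X (V i) := by
  have hX_star : lindbladianDual V Xᴴ = 0 := by
    rw [lindbladianDual_conjTranspose, hX, conjTranspose_zero]
  have hdiss : (ρ * ∑ i, (V i * X - X * V i)ᴴ * (V i * X - X * V i)).trace = 0 := by
    rw [← lindbladianDual_conjTranspose_mul_self, hX, hX_star, Matrix.mul_zero, Matrix.zero_mul,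
      sub_zero, sub_zero, ← trace_lindbladian_mul, hρ_st, Matrix.zero_mul, trace_zero]
  rw [Finset.mul_sum, trace_sum, Finset.sum_eq_zero_iff_of_nonneg fun i _ =>
    hρ.posSemidef.trace_mul_conjTranspose_mul_self_nonneg _] at hdiss
  exact (sub_eq_zero.mp (hρ.trace_mul_conjTranspose_mul_self_eq_zero_iff.mp
    (hdiss i (Finset.mem_univ i)))).symm

lemma commute_conjTranspose_of_lindbladianDual_eq_zero (hρ : ρ.PosDef)
    (hρ_st : lindbladian V ρ = 0) {X : Matrix m m 𝕜} (hX : lindbladianDual V X = 0) (i : ι) :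
    Commute X (V i)ᴴ := by
  have hX_star : lindbladianDual V Xᴴ = 0 := by
    rw [lindbladianDual_conjTranspose, hX, conjTranspose_zero]
  simpa only [star_eq_conjTranspose, conjTranspose_conjTranspose] using
    (commute_of_lindbladianDual_eq_zero hρ hρ_st hX_star i).star_star

end Matrix

theorem unique_stationary_state_of_trivial_commutant_general
    {n : ℕ} {ι : Type} [Fintype ι]
    (V : ι → Matrix (Fin n) (Fin n) ℂ)
    (L : Matrix (Fin n) (Fin n) ℂ → Matrix (Fin n) (Fin n) ℂ)
    (hL : ∀ ρ, L ρ = ∑ i, (V i * ρ * (V i)ᴴ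
        - (1 / 2 : ℂ) • ((V i)ᴴ * V i * ρ + ρ * ((V i)ᴴ * V i))))
    (ρ₀ : Matrix (Fin n) (Fin n) ℂ)
    (hρ₀_pos : ρ₀.PosDef) (hρ₀_tr : ρ₀.trace = 1) (hρ₀_st : L ρ₀ = 0)
    (hcomm : {X : Matrix (Fin n) (Fin n) ℂ |
        ∀ i, X * V i = V i * X ∧ X * (V i)ᴴ = (V i)ᴴ * X}
      = {X : Matrix (Fin n) (Fin n) ℂ | ∃ c : ℂ, X = c • (1 : Matrix (Fin n) (Fin n) ℂ)}) :
    ∀ ρ : Matrix (Fin n) (Fin n) ℂ, ρ.PosSemidef → ρ.trace = 1 → L ρ = 0 → ρ = ρ₀ := by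
  intro ρ _ hρ_tr hρ_st
  obtain rfl : L = lindbladian V := funext fun ρ => (hL ρ).trans (lindbladian_apply V ρ).symm
  have hker_dual : ker (lindbladianDual V) ≤ ℂ ∙ 1 := fun X hX => by
    obtain ⟨c, rfl⟩ : X ∈ {X : Matrix (Fin n) (Fin n) ℂ | ∃ c : ℂ, X = c • 1} :=
      hcomm ▸ fun i => ⟨commute_of_lindbladianDual_eq_zero hρ₀_pos hρ₀_st hX i,
        commute_conjTranspose_of_lindbladianDual_eq_zero hρ₀_pos hρ₀_st hX i⟩
    exact Submodule.smul_mem _ c (Submodule.mem_span_singleton_self 1)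
  have hker : finrank ℂ (ker (lindbladian V)) ≤ 1 :=
    calc finrank ℂ (ker (lindbladian V)) ≤ finrank ℂ (ker (lindbladianDual V)) :=
          finrank_ker_le_of_trace_mul_eq (trace_lindbladian_mul V)
      _ ≤ finrank ℂ (ℂ ∙ (1 : Matrix (Fin n) (Fin n) ℂ)) := Submodule.finrank_mono hker_dual
      _ ≤ 1 := by simpa using finrank_span_le_card ({1} : Set (Matrix (Fin n) (Fin n) ℂ))
  exact Submodule.eq_of_finrank_le_one hker (traceLinearMap _ ℂ ℂ) hρ_st hρ₀_st
    (by simp [hρ_tr, hρ₀_tr]) (by simp [hρ₀_tr])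

/-- If the purely dissipative Lindblad generator built from a finite
family `V i` admits a positive definite trace-one stationary state `ρ₀`, and the
commutant of `{V i} ∪ {(V i)ᴴ}` consists exactly of the scalar multiples of the
identity, then `ρ₀` is the unique stationary state. -/
theorem unique_stationary_state_of_trivial_commutant
    {n : ℕ} (hn : 1 ≤ n) {ι : Type} [Fintype ι]
    (V : ι → Matrix (Fin n) (Fin n) ℂ)
    (L : Matrix (Fin n) (Fin n) ℂ → Matrix (Fin n) (Fin n) ℂ)
    (hL : ∀ ρ, L ρ = ∑ i, (V i * ρ * (V i)ᴴ
        - (1 / 2 : ℂ) • ((V i)ᴴ * V i * ρ + ρ * ((V i)ᴴ * V i))))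
    (ρ₀ : Matrix (Fin n) (Fin n) ℂ)
    (hρ₀_pos : ρ₀.PosDef) (hρ₀_tr : ρ₀.trace = 1) (hρ₀_st : L ρ₀ = 0)
    (hcomm : {X : Matrix (Fin n) (Fin n) ℂ |
        ∀ i, X * V i = V i * X ∧ X * (V i)ᴴ = (V i)ᴴ * X}
      = {X : Matrix (Fin n) (Fin n) ℂ | ∃ c : ℂ, X = c • (1 : Matrix (Fin n) (Fin n) ℂ)}) :
    ∀ ρ : Matrix (Fin n) (Fin n) ℂ, ρ.PosSemidef → ρ.trace = 1 → L ρ = 0 → ρ = ρ₀ :=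
  unique_stationary_state_of_trivial_commutant_general V L hL ρ₀ hρ₀_pos hρ₀_tr hρ₀_st hcomm
end

section
/- Let n ≥ 1 and let (V_i)_{i∈ι} be a finite family of n×n complex matrices with purely dissipative Lindblad generator L, and let ρ₀ be a positive definite trace-one matrix with L(ρ₀) = 0. Let M denote the commutant of {V_i : i ∈ ι} ∪ {V_i† : i ∈ ι}, and suppose the commutant of {V_i : i ∈ ι} equals M. Let P_1, …, P_m be nonzero Hermitian idempotent n×n matrices with P_k P_l = 0 for k ≠ l and Σ_k P_k = 𝟙, such that the commutant of M equals the linear span of {P_1, …, P_m} and this span is contained in M (i.e. Z = M′ in Frigerio's notation). Then for every positive semidefinite trace-one matrix ρ, exp(tL)(ρ) tends to Σ_k P_k ρ P_k as t → +∞. -/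
open Matrix Filter
open scoped ComplexOrder

attribute [local instance] Matrix.frobeniusNormedAddCommGroup Matrix.frobeniusNormedSpace
attribute [-instance] instTopologicalSpaceMatrix Matrix.instUniformSpace

/-!
Every jump operator `V i` commutes with `M`, so it lies in `M' = span {P k}`:
`V i = ∑ k, c i k • P k`.
Hence each block `P k ρ P l` is an eigenvector of `L`, with eigenvalue `Λ k l` whose real part
is `-½ ∑ i, |c i k - c i l|²`. Diagonal blocks are stationary. An off-diagonal block either
decays exponentially, or all `c i k = c i l`; in that case the block commutes with every `V i`,
so it lies in `M`, and it commutes with `P k ∈ M'`, which forces it to vanish.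
-/

section Exponential

variable {E : Type*} [NormedAddCommGroup E] [NormedSpace ℂ E]

theorem NormedSpace.exp_apply_of_apply_eq_smul [CompleteSpace E] {T : E →L[ℂ] E} {x : E}
    {μ : ℂ} (h : T x = μ • x) : NormedSpace.exp T x = Complex.exp μ • x := by
  have hpow : ∀ k : ℕ, (T ^ k) x = μ ^ k • x := fun k => by
    induction k with
    | zero => simp
    | succ k ih =>
      rw [pow_succ', pow_succ', mul_apply_eq_comp, ih, map_smul, h, smul_smul, mul_comm]
  have hT := (NormedSpace.exp_series_hasSum_exp' (𝕂 := ℂ) T).mapL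
    (ContinuousLinearMap.apply ℂ E x)
  simp only [ContinuousLinearMap.apply_apply, _root_.smul_apply, hpow, smul_smul] at hT
  rw [Complex.exp_eq_exp_ℂ]
  exact hT.unique ((NormedSpace.exp_series_hasSum_exp' (𝕂 := ℂ) μ).smul_const x)

theorem NormedSpace.exp_real_smul_apply_of_apply_eq_smul [CompleteSpace E] {T : E →L[ℂ] E}
    {x : E} {μ : ℂ} (h : T x = μ • x) (t : ℝ) :
    NormedSpace.exp (t • T) x = Complex.exp (t * μ) • x :=
  NormedSpace.exp_apply_of_apply_eq_smul <| by
    rw [_root_.smul_apply, h, ← smul_assoc, Complex.real_smul]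

theorem Complex.tendsto_exp_mul_nhds_zero {μ : ℂ} (hμ : μ.re < 0) :
    Tendsto (fun t : ℝ => Complex.exp (t * μ)) atTop (nhds 0) := by
  rw [Complex.tendsto_exp_nhds_zero_iff]
  simp only [Complex.re_ofReal_mul]
  exact tendsto_id.atTop_mul_const_of_neg hμ

theorem tendsto_sum_sum_exp_mul_smul {κ : Type*} [Fintype κ] {Λ : κ → κ → ℂ} {B : κ → κ → E}
    (hdiag : ∀ k, Λ k k = 0)
    (hoff : ∀ k l, k ≠ l → (Λ k l).re < 0 ∨ B k l = 0) :
    Tendsto (fun t : ℝ => ∑ k, ∑ l, Complex.exp (t * Λ k l) • B k l) atTop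
      (nhds (∑ k, B k k)) := by
  classical
  have hlim : ∑ k, B k k = ∑ k, ∑ l, if k = l then B k l else 0 := by simp
  rw [hlim]
  refine tendsto_finsetSum _ fun k _ => tendsto_finsetSum _ fun l _ => ?_
  split_ifs with hkl
  · subst hkl
    simp [hdiag]
  · rcases hoff k l hkl with hre | hB
    · simpa using (Complex.tendsto_exp_mul_nhds_zero hre).smul_const (B k l)
    · simp [hB]

end Exponential

section OrthogonalIdempotents

variable {R κ : Type*} [Semiring R] {P : κ → R}

theorem OrthogonalIdempotents.corner_eq_zero_of_commute (hP : OrthogonalIdempotents P)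
    {k l : κ} (hkl : k ≠ l) {a : R} (h : Commute (P k) (P k * a * P l)) :
    P k * a * P l = 0 :=
  calc P k * a * P l = P k * (P k * a * P l) := by rw [← mul_assoc, ← mul_assoc, (hP.idem k).eq]
    _ = P k * a * P l * P k := h.eq
    _ = 0 := by rw [mul_assoc, hP.ortho hkl.symm, mul_zero]

variable [Fintype κ]

theorem CompleteOrthogonalIdempotents.sum_sum_corner (hP : CompleteOrthogonalIdempotents P)
    (a : R) : ∑ k, ∑ l, P k * a * P l = a := by
  simp only [← Finset.mul_sum, ← Finset.sum_mul, hP.complete, one_mul, mul_one]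

variable {S : Type*} [CommSemiring S] [Algebra S R]

theorem OrthogonalIdempotents.mul_sum_smul (hP : OrthogonalIdempotents P) (c : κ → S) (k : κ) :
    P k * ∑ l, c l • P l = c k • P k := by
  classical
  simp [Finset.mul_sum, hP.mul_eq]

theorem OrthogonalIdempotents.sum_smul_mul (hP : OrthogonalIdempotents P) (c : κ → S) (k : κ) :
    (∑ l, c l • P l) * P k = c k • P k := by
  classical
  simp [Finset.sum_mul, hP.mul_eq]

theorem OrthogonalIdempotents.sum_smul_mul_corner (hP : OrthogonalIdempotents P) (c : κ → S)
    (a : R) (k l : κ) : (∑ j, c j • P j) * (P k * a * P l) = c k • (P k * a * P l) := by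
  rw [← mul_assoc, ← mul_assoc, hP.sum_smul_mul, smul_mul_assoc, smul_mul_assoc]

theorem OrthogonalIdempotents.corner_mul_sum_smul (hP : OrthogonalIdempotents P) (c : κ → S)
    (a : R) (k l : κ) : P k * a * P l * (∑ j, c j • P j) = c l • (P k * a * P l) := by
  rw [mul_assoc, hP.mul_sum_smul, mul_smul_comm]

end OrthogonalIdempotents

section Lindblad

variable {ι : Type*} [Fintype ι]

/-- The eigenvalue of the Lindblad generator on an operator `B` with `V i * B = a i • B` and
`B * V i = b i • B` for all `i`. -/
noncomputable def lindbladRate (a b : ι → ℂ) : ℂ :=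
  ∑ i, (a i * star (b i) - (1 / 2 : ℂ) * (star (a i) * a i + star (b i) * b i))

theorem lindbladRate_self (a : ι → ℂ) : lindbladRate a a = 0 :=
  Finset.sum_eq_zero fun i _ => by ring

theorem re_lindbladRate (a b : ι → ℂ) :
    (lindbladRate a b).re = -(1 / 2) * ∑ i, Complex.normSq (a i - b i) := by
  rw [lindbladRate, Complex.re_sum, Finset.mul_sum]
  refine Finset.sum_congr rfl fun i _ => ?_
  simp only [Complex.sub_re, Complex.add_re, Complex.mul_re, Complex.sub_im, Complex.add_im,
    Complex.mul_im, RCLike.star_def, Complex.conj_re, Complex.conj_im, Complex.normSq_apply,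
    Complex.div_ofNat_re, Complex.div_ofNat_im, Complex.one_re, Complex.one_im]
  ring

theorem re_lindbladRate_neg {a b : ι → ℂ} (hab : a ≠ b) : (lindbladRate a b).re < 0 := by
  obtain ⟨i, hi⟩ := Function.ne_iff.1 hab
  have hpos : 0 < ∑ i, Complex.normSq (a i - b i) :=
    Finset.sum_pos' (fun i _ => Complex.normSq_nonneg _)
      ⟨i, Finset.mem_univ i, Complex.normSq_pos.2 (sub_ne_zero.2 hi)⟩
  rw [re_lindbladRate]
  linarith

variable {n : Type*} [Fintype n]

theorem lindblad_sum_eq_smul {V : ι → Matrix n n ℂ} {B : Matrix n n ℂ} {a b : ι → ℂ}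
    (hVB : ∀ i, V i * B = a i • B) (hVHB : ∀ i, (V i)ᴴ * B = star (a i) • B)
    (hBV : ∀ i, B * V i = b i • B) (hBVH : ∀ i, B * (V i)ᴴ = star (b i) • B) :
    ∑ i, (V i * B * (V i)ᴴ - (1 / 2 : ℂ) • ((V i)ᴴ * V i * B + B * ((V i)ᴴ * V i)))
      = lindbladRate a b • B := by
  rw [lindbladRate, Finset.sum_smul]
  refine Finset.sum_congr rfl fun i _ => ?_
  have hjump : V i * B * (V i)ᴴ = (a i * star (b i)) • B := by
    rw [hVB, smul_mul_assoc, hBVH, smul_smul]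
  have hleft : (V i)ᴴ * V i * B = (star (a i) * a i) • B := by
    rw [mul_assoc, hVB, mul_smul_comm, hVHB, smul_smul, mul_comm]
  have hright : B * ((V i)ᴴ * V i) = (star (b i) * b i) • B := by
    rw [← mul_assoc, hBVH, smul_mul_assoc, hBV, smul_smul]
  rw [hjump, hleft, hright]
  module

theorem lindblad_corner_eq_smul [DecidableEq n] {κ : Type*} [Fintype κ]
    {P : κ → Matrix n n ℂ} (hP : OrthogonalIdempotents P) (hPH : ∀ k, (P k)ᴴ = P k)
    {V : ι → Matrix n n ℂ} {c : ι → κ → ℂ} (hc : ∀ i, ∑ j, c i j • P j = V i)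
    (A : Matrix n n ℂ) (k l : κ) :
    ∑ i, (V i * (P k * A * P l) * (V i)ᴴ
        - (1 / 2 : ℂ) • ((V i)ᴴ * V i * (P k * A * P l) + P k * A * P l * ((V i)ᴴ * V i)))
      = lindbladRate (c · k) (c · l) • (P k * A * P l) := by
  have hcH : ∀ i, ∑ j, star (c i j) • P j = (V i)ᴴ := fun i => by
    simp [← hc i, conjTranspose_sum, hPH]
  refine lindblad_sum_eq_smul (fun i => ?_) (fun i => ?_) (fun i => ?_) (fun i => ?_)
  · rw [← hc i, hP.sum_smul_mul_corner]
  · rw [← hcH i, hP.sum_smul_mul_corner]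
  · rw [← hc i, hP.corner_mul_sum_smul]
  · rw [← hcH i, hP.corner_mul_sum_smul]

end Lindblad

theorem convergence_case_Z_eq_M'_general
    {n : ℕ} {ι : Type} [Fintype ι]
    (V : ι → Matrix (Fin n) (Fin n) ℂ)
    (L : Matrix (Fin n) (Fin n) ℂ →ₗ[ℂ] Matrix (Fin n) (Fin n) ℂ)
    (hL : ∀ ρ, L ρ = ∑ i, (V i * ρ * (V i)ᴴ
        - (1 / 2 : ℂ) • ((V i)ᴴ * V i * ρ + ρ * ((V i)ᴴ * V i))))
    (M : Set (Matrix (Fin n) (Fin n) ℂ))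
    (hVcomm : {X : Matrix (Fin n) (Fin n) ℂ | ∀ i, X * V i = V i * X} = M)
    {m : ℕ} (P : Fin m → Matrix (Fin n) (Fin n) ℂ)
    (hP_herm : ∀ k, (P k)ᴴ = P k)
    (hP_idem : ∀ k, P k * P k = P k)
    (hP_orth : ∀ k l, k ≠ l → P k * P l = 0)
    (hP_sum : ∑ k, P k = 1)
    (hZ : {X : Matrix (Fin n) (Fin n) ℂ | ∀ Y ∈ M, X * Y = Y * X}
      = (Submodule.span ℂ (Set.range P) : Set (Matrix (Fin n) (Fin n) ℂ))) :
    ∀ ρ : Matrix (Fin n) (Fin n) ℂ, ρ.PosSemidef → ρ.trace = 1 →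
      Tendsto (fun t : ℝ =>
          NormedSpace.exp (t • LinearMap.toContinuousLinearMap L) ρ)
        atTop (nhds (∑ k, P k * ρ * P k)) := by
  intro ρ _ _
  have hP : CompleteOrthogonalIdempotents P :=
    ⟨⟨hP_idem, fun k l hkl => hP_orth k l hkl⟩, hP_sum⟩
  have hV : ∀ i, V i ∈ Submodule.span ℂ (Set.range P) := fun i => by
    rw [← SetLike.mem_coe, ← hZ, ← hVcomm]
    exact fun Y hY => (hY i).symm
  choose c hc using fun i => (Submodule.mem_span_range_iff_exists_fun ℂ).1 (hV i)
  have hexp (t : ℝ) : NormedSpace.exp (t • LinearMap.toContinuousLinearMap L) ρ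
      = ∑ k, ∑ l, Complex.exp (t * lindbladRate (c · k) (c · l)) • (P k * ρ * P l) := by
    conv_lhs => rw [← hP.sum_sum_corner ρ]
    simp only [map_sum]
    exact Finset.sum_congr rfl fun k _ => Finset.sum_congr rfl fun l _ =>
      NormedSpace.exp_real_smul_apply_of_apply_eq_smul
        ((hL _).trans (lindblad_corner_eq_smul hP.toOrthogonalIdempotents hP_herm hc ρ k l)) t
  simp only [hexp]
  refine tendsto_sum_sum_exp_mul_smul (fun k => lindbladRate_self _) fun k l hkl => ?_
  by_cases hckl : (c · k) = (c · l)
  · right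
    have hmem : P k * ρ * P l ∈ M := by
      rw [← hVcomm]
      intro i
      rw [← hc i, hP.corner_mul_sum_smul, hP.sum_smul_mul_corner, congrFun hckl i]
    have hPk : P k ∈ {X | ∀ Y ∈ M, X * Y = Y * X} := hZ ▸ Submodule.subset_span ⟨k, rfl⟩
    exact hP.corner_eq_zero_of_commute hkl (hPk _ hmem)
  · exact .inl (re_lindbladRate_neg hckl)

/-- Frigerio, case `Z = M'`: with `M` the commutant of `{V i} ∪ {(V i)ᴴ}`,
if the commutant of `{V i}` equals `M`, and the commutant `M'` of `M` equals the linear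
span of a complete family of pairwise orthogonal projectors `P k` with this span contained
in `M`, then every state `ρ` evolves towards `∑ k, P k ρ P k`. -/
theorem convergence_case_Z_eq_M'
    {n : ℕ} (hn : 1 ≤ n) {ι : Type} [Fintype ι]
    (V : ι → Matrix (Fin n) (Fin n) ℂ)
    (L : Matrix (Fin n) (Fin n) ℂ →ₗ[ℂ] Matrix (Fin n) (Fin n) ℂ)
    (hL : ∀ ρ, L ρ = ∑ i, (V i * ρ * (V i)ᴴ
        - (1 / 2 : ℂ) • ((V i)ᴴ * V i * ρ + ρ * ((V i)ᴴ * V i))))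
    (ρ₀ : Matrix (Fin n) (Fin n) ℂ)
    (hρ₀_pos : ρ₀.PosDef) (hρ₀_tr : ρ₀.trace = 1) (hρ₀_st : L ρ₀ = 0)
    (M : Set (Matrix (Fin n) (Fin n) ℂ))
    (hM : M = {X : Matrix (Fin n) (Fin n) ℂ |
        ∀ i, X * V i = V i * X ∧ X * (V i)ᴴ = (V i)ᴴ * X})
    (hVcomm : {X : Matrix (Fin n) (Fin n) ℂ | ∀ i, X * V i = V i * X} = M)
    {m : ℕ} (P : Fin m → Matrix (Fin n) (Fin n) ℂ)
    (hP_ne : ∀ k, P k ≠ 0)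
    (hP_herm : ∀ k, (P k)ᴴ = P k)
    (hP_idem : ∀ k, P k * P k = P k)
    (hP_orth : ∀ k l, k ≠ l → P k * P l = 0)
    (hP_sum : ∑ k, P k = 1)
    (hZ : {X : Matrix (Fin n) (Fin n) ℂ | ∀ Y ∈ M, X * Y = Y * X}
      = (Submodule.span ℂ (Set.range P) : Set (Matrix (Fin n) (Fin n) ℂ)))
    (hZM : (Submodule.span ℂ (Set.range P) : Set (Matrix (Fin n) (Fin n) ℂ)) ⊆ M) :
    ∀ ρ : Matrix (Fin n) (Fin n) ℂ, ρ.PosSemidef → ρ.trace = 1 →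
      Tendsto (fun t : ℝ =>
          NormedSpace.exp (t • LinearMap.toContinuousLinearMap L) ρ)
        atTop (nhds (∑ k, P k * ρ * P k)) :=
  convergence_case_Z_eq_M'_general V L hL M hVcomm P hP_herm hP_idem hP_orth hP_sum hZ
end

section
/- Let a, b be real numbers, let A be the 3×3 complex matrix !![a, i·b, 0; −i·b, a, 0; 0, 0, a], and let C = fromBlocks A A A A be the 6×6 block matrix [[A, A], [A, A]] (the Kossakowski matrix of the model with B = A). Then C is positive semidefinite if and only if 0 ≤ a and b² ≤ a² (the complete positivity condition a² − b² ≥ 0). -/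
/-!
The quadratic form of `fromBlocks A A A A` at `(x, y)` is that of `A` at `x + y`, so the block
matrix is positive semidefinite exactly when `A` is. The vectors `(1, -i, 0)`, `(1, i, 0)` and
`(0, 0, 1)` are orthogonal eigenvectors of `A` with eigenvalues `a + b`, `a - b` and `a`, so `A` is
positive semidefinite iff `a + b ≥ 0` and `a - b ≥ 0`, i.e. iff `|b| ≤ a`.
-/

open Matrix Complex
open scoped ComplexOrder

namespace Matrix

theorem posSemidef_fromBlocks_self_iff {n R : Type*} [Fintype n] [DecidableEq n] [Ring R]
    [PartialOrder R] [StarRing R] {A : Matrix n n R} :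
    (fromBlocks A A A A).PosSemidef ↔ A.PosSemidef := by
  refine ⟨fun h => h.submatrix Sum.inl, fun h => ?_⟩
  let B : Matrix (n ⊕ n) n R := fromRows 1 1
  have hC : fromBlocks A A A A = B * A * Bᴴ := by
    simp [B, conjTranspose_fromRows_eq_fromCols_conjTranspose, fromRows_mul]
  exact hC ▸ h.mul_mul_conjTranspose_same B

theorem PosSemidef.nonneg_of_mulVec_eq_smul {n 𝕜 : Type*} [Fintype n] [RCLike 𝕜]
    {A : Matrix n n 𝕜} (hA : A.PosSemidef) {v : n → 𝕜} (hv : v ≠ 0) {μ : ℝ}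
    (hAv : A *ᵥ v = (μ : 𝕜) • v) : 0 ≤ μ := by
  obtain ⟨r, hr, hrv⟩ := RCLike.pos_iff_exists_ofReal.mp (dotProduct_star_self_pos_iff.mpr hv)
  have hform := hA.dotProduct_mulVec_nonneg v
  rw [hAv, dotProduct_smul, ← hrv, smul_eq_mul, ← RCLike.ofReal_mul,
    RCLike.ofReal_nonneg] at hform
  exact nonneg_of_mul_nonneg_left hform hr

end Matrix

def kossakowskiBlock (a b : ℝ) : Matrix (Fin 3) (Fin 3) ℂ :=
  !![(a : ℂ), I * b, 0; -I * b, (a : ℂ), 0; 0, 0, (a : ℂ)]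

section KossakowskiBlock

variable (a b : ℝ)

theorem kossakowskiBlock_mulVec_eq_add_smul :
    kossakowskiBlock a b *ᵥ ![1, -I, 0] = ((a + b : ℝ) : ℂ) • ![1, -I, 0] := by
  ext i; fin_cases i <;> simp [kossakowskiBlock, vecHead, vecTail, Complex.ext_iff]

theorem kossakowskiBlock_mulVec_eq_sub_smul :
    kossakowskiBlock a b *ᵥ ![1, I, 0] = ((a - b : ℝ) : ℂ) • ![1, I, 0] := by
  ext i; fin_cases i <;> simp [kossakowskiBlock, vecHead, vecTail, Complex.ext_iff] <;> ring

theorem kossakowskiBlock_eq_sum_vecMulVec :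
    kossakowskiBlock a b = ((a + b) / 2) • vecMulVec ![1, -I, 0] (star ![1, -I, 0])
      + ((a - b) / 2) • vecMulVec ![1, I, 0] (star ![1, I, 0])
      + a • vecMulVec ![0, 0, 1] (star ![0, 0, 1]) := by
  ext i j
  fin_cases i <;> fin_cases j <;> simp [kossakowskiBlock, vecMulVec, Complex.ext_iff] <;> ring

theorem posSemidef_kossakowskiBlock_iff :
    (kossakowskiBlock a b).PosSemidef ↔ 0 ≤ a + b ∧ 0 ≤ a - b := by
  refine ⟨fun h => ⟨?_, ?_⟩, fun ⟨hadd, hsub⟩ => ?_⟩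
  · exact h.nonneg_of_mulVec_eq_smul (by simp) (kossakowskiBlock_mulVec_eq_add_smul a b)
  · exact h.nonneg_of_mulVec_eq_smul (by simp) (kossakowskiBlock_mulVec_eq_sub_smul a b)
  · rw [kossakowskiBlock_eq_sum_vecMulVec]
    exact (((posSemidef_vecMulVec_self_star _).smul (by linarith)).add
      ((posSemidef_vecMulVec_self_star _).smul (by linarith))).add
      ((posSemidef_vecMulVec_self_star _).smul (by linarith))

end KossakowskiBlock

/-- the Kossakowski matrix `C = fromBlocks A A A A`, with
`A = !![a, i·b, 0; -i·b, a, 0; 0, 0, a]`, is positive semidefinite if and only if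
`0 ≤ a` and `b² ≤ a²`. -/
theorem kossakowski_posSemidef_iff
    (a b : ℝ)
    (A : Matrix (Fin 3) (Fin 3) ℂ)
    (hA : A = !![(a : ℂ), Complex.I * b, 0; -Complex.I * b, (a : ℂ), 0; 0, 0, (a : ℂ)])
    (C : Matrix (Fin 3 ⊕ Fin 3) (Fin 3 ⊕ Fin 3) ℂ)
    (hC : C = fromBlocks A A A A) :
    C.PosSemidef ↔ (0 ≤ a ∧ b ^ 2 ≤ a ^ 2) := by
  rw [hC, posSemidef_fromBlocks_self_iff, hA, ← kossakowskiBlock, posSemidef_kossakowskiBlock_iff]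
  constructor
  · rintro ⟨hadd, hsub⟩
    exact ⟨by linarith, by nlinarith⟩
  · rintro ⟨ha, hsq⟩
    obtain ⟨hlower, hupper⟩ := abs_le.mp (abs_le_of_sq_le_sq hsq ha)
    exact ⟨by linarith, by linarith⟩
end

section
/- Let σ be a 2×2 complex matrix with Tr σ = 0 and det σ ≠ 0. Then there exist μ ∈ ℂ and an invertible 2×2 complex matrix R with R·R = 𝟙 (so R = R⁻¹) such that σ = μ · R σ3 R and μ² = −det σ (equivalently, writing σ = Σ_k c_k σ_k, μ² = Σ_k c_k²). -/
/-!
For traceless `σ` one has `σ² = -det σ • 1`, so with `μ² = -det σ` the matrix `τ = μ⁻¹ σ` is an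
involution. Any two involutions `P`, `Q` satisfy `(P + Q) P = Q (P + Q)`, and for traceless
`2 × 2` ones the anticommutator `PQ + QP` is the scalar `tr (PQ)`, so `(P + Q)² = 2 + tr (PQ)`.
When this scalar is nonzero, a suitable multiple `R` of `P + Q` satisfies `R² = 1` and
`R P R = Q`. For `P = σ3`, `Q = τ` the scalar is `2 (μ + σ₀₀) / μ`, and the sign of `μ` is free.
-/

open Matrix

noncomputable def pauli3 : Matrix (Fin 2) (Fin 2) ℂ := !![1, 0; 0, -1]

namespace Matrix

variable {K : Type*} [CommRing K]

lemma mul_self_eq_neg_det_smul_one_of_trace_eq_zero {A : Matrix (Fin 2) (Fin 2) K}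
    (hA : A.trace = 0) : A * A = -A.det • (1 : Matrix (Fin 2) (Fin 2) K) := by
  rw [trace_fin_two, add_eq_zero_iff_eq_neg'] at hA
  ext i j
  fin_cases i <;> fin_cases j <;>
    simp only [Fin.zero_eta, Fin.mk_one, mul_apply, Fin.sum_univ_two, det_fin_two, hA,
      Matrix.smul_apply, one_apply_eq, one_apply_ne zero_ne_one, one_apply_ne one_ne_zero,
      smul_eq_mul] <;> ring

lemma mul_add_mul_eq_trace_smul_one_of_trace_eq_zero {P Q : Matrix (Fin 2) (Fin 2) K}
    (hP : P.trace = 0) (hQ : Q.trace = 0) :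
    P * Q + Q * P = (P * Q).trace • (1 : Matrix (Fin 2) (Fin 2) K) := by
  rw [trace_fin_two, add_eq_zero_iff_eq_neg'] at hP hQ
  ext i j
  fin_cases i <;> fin_cases j <;>
    simp only [Fin.zero_eta, Fin.mk_one, Matrix.add_apply, mul_apply, Fin.sum_univ_two,
      trace_fin_two, hP, hQ, Matrix.smul_apply, one_apply_eq, one_apply_ne zero_ne_one,
      one_apply_ne one_ne_zero, smul_eq_mul] <;> ring

end Matrix

section Involution

variable {K A : Type*} [CommRing K] [Ring A] [Algebra K A] {P Q : A} {r s : K}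

lemma add_mul_eq_mul_add_of_mul_self_eq_one (hP : P * P = 1) (hQ : Q * Q = 1) :
    (P + Q) * P = Q * (P + Q) := by
  rw [add_mul, mul_add, hP, hQ, add_comm]

lemma smul_add_mul_self_eq_one (hs : (P + Q) * (P + Q) = s • 1) (hr : r ^ 2 * s = 1) :
    r • (P + Q) * (r • (P + Q)) = 1 := by
  rw [smul_mul_smul_comm, hs, smul_smul, ← sq, hr, one_smul]

lemma smul_add_mul_mul_smul_add_of_mul_self_eq_one (hP : P * P = 1) (hQ : Q * Q = 1)
    (hs : (P + Q) * (P + Q) = s • 1) (hr : r ^ 2 * s = 1) :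
    r • (P + Q) * P * (r • (P + Q)) = Q := by
  rw [smul_mul_assoc, add_mul_eq_mul_add_of_mul_self_eq_one hP hQ, smul_mul_smul_comm, mul_assoc,
    hs, mul_smul_one, smul_smul, ← sq, hr, one_smul]

end Involution

lemma Matrix.exists_mul_self_eq_one_conj_of_trace_eq_zero {K : Type*} [Field K] [IsAlgClosed K]
    {P Q : Matrix (Fin 2) (Fin 2) K} (hPtr : P.trace = 0) (hQtr : Q.trace = 0)
    (hP : P * P = 1) (hQ : Q * Q = 1) (h : 2 + (P * Q).trace ≠ 0) :
    ∃ R : Matrix (Fin 2) (Fin 2) K, R * R = 1 ∧ R * P * R = Q := by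
  have hs : (P + Q) * (P + Q) = (2 + (P * Q).trace) • 1 := by
    have := mul_add_mul_eq_trace_smul_one_of_trace_eq_zero hPtr hQtr
    rw [add_mul, mul_add, mul_add, hP, hQ]
    linear_combination (norm := module) this
  obtain ⟨r, hr⟩ := IsAlgClosed.exists_pow_nat_eq (2 + (P * Q).trace)⁻¹ two_pos
  have hr' : r ^ 2 * (2 + (P * Q).trace) = 1 := by rw [hr, inv_mul_cancel₀ h]
  exact ⟨r • (P + Q), smul_add_mul_self_eq_one hs hr',
    smul_add_mul_mul_smul_add_of_mul_self_eq_one hP hQ hs hr'⟩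

lemma pauli3_mul_self : pauli3 * pauli3 = 1 := by
  rw [pauli3, mul_fin_two, one_fin_two]
  norm_num

lemma trace_pauli3 : pauli3.trace = 0 := by
  rw [pauli3, trace_fin_two_of]
  ring

lemma trace_pauli3_mul (M : Matrix (Fin 2) (Fin 2) ℂ) :
    (pauli3 * M).trace = M 0 0 - M 1 1 := by
  rw [pauli3, eta_fin_two M, mul_fin_two, trace_fin_two_of]
  simp only [of_apply, cons_val', cons_val_zero, cons_val_one, cons_val_fin_one]
  ring

/-- a traceless non-singular 2×2 matrix `σ` can be written as
`σ = μ • R σ3 R` with `R` an involution (`R R = 𝟙`, hence `R = R⁻¹`) and `μ² = -det σ`. -/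
theorem traceless_nonsingular_normal_form
    (σ : Matrix (Fin 2) (Fin 2) ℂ) (htr : σ.trace = 0) (hdet : σ.det ≠ 0) :
    ∃ (μ : ℂ) (R : Matrix (Fin 2) (Fin 2) ℂ),
      IsUnit R ∧ R * R = 1 ∧ σ = μ • (R * pauli3 * R) ∧ μ ^ 2 = -σ.det := by
  obtain ⟨μ, hμ, hμσ⟩ : ∃ μ : ℂ, μ ^ 2 = -σ.det ∧ μ + σ 0 0 ≠ 0 := by
    obtain ⟨μ₀, hμ₀⟩ := IsAlgClosed.exists_pow_nat_eq (-σ.det) two_pos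
    have hμ₀0 : μ₀ ≠ 0 := by rintro rfl; exact hdet (by linear_combination hμ₀)
    by_cases h : μ₀ + σ 0 0 = 0
    · exact ⟨-μ₀, by rw [neg_sq, hμ₀], fun h' => hμ₀0 (by linear_combination (h - h') / 2)⟩
    · exact ⟨μ₀, hμ₀, h⟩
  have hμ0 : μ ≠ 0 := by rintro rfl; exact hdet (by linear_combination hμ)
  set τ := μ⁻¹ • σ with hτdef
  have hτtr : τ.trace = 0 := by rw [hτdef, trace_smul, htr, smul_zero]
  have hτ : τ * τ = 1 := by
    rw [hτdef, smul_mul_smul_comm, mul_self_eq_neg_det_smul_one_of_trace_eq_zero htr, ← hμ,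
      smul_smul, show μ⁻¹ * μ⁻¹ * μ ^ 2 = 1 by field_simp, one_smul]
  have hscalar : 2 + (pauli3 * τ).trace = 2 * (μ + σ 0 0) / μ := by
    rw [trace_fin_two, add_eq_zero_iff_eq_neg'] at htr
    rw [hτdef, Matrix.mul_smul, trace_smul, trace_pauli3_mul, htr, smul_eq_mul]
    field_simp
    ring
  obtain ⟨R, hR, hRτ⟩ := exists_mul_self_eq_one_conj_of_trace_eq_zero trace_pauli3 hτtr
    pauli3_mul_self hτ (hscalar ▸ div_ne_zero (mul_ne_zero two_ne_zero hμσ) hμ0)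
  refine ⟨μ, R, IsUnit.of_mul_eq_one R hR, hR, ?_, hμ⟩
  rw [hRτ, hτdef, smul_smul, mul_inv_cancel₀ hμ0, one_smul]
end

section
/- Let R be an invertible 2×2 complex matrix with R·R = 𝟙, let μ ∈ ℂ with μ ≠ 0, and set σ = μ · R σ3 R. Then the commutant of the single 4×4 matrix 𝟙⊗σ + σ⊗𝟙, i.e. {X ∈ M₄(ℂ) : X(𝟙⊗σ + σ⊗𝟙) = (𝟙⊗σ + σ⊗𝟙)X}, equals the complex linear span of the six matrices 𝟙⊗𝟙, 𝟙⊗σ, σ⊗𝟙, σ⊗σ, Ω⁺, and (R⊗R)(σ1⊗σ2 − σ2⊗σ1)(R⊗R). -/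
open Matrix Complex
open scoped Kronecker

noncomputable section

/-- The Pauli matrices. -/
def pauli : Fin 3 → Matrix (Fin 2) (Fin 2) ℂ :=
  ![!![0, 1; 1, 0], !![0, -Complex.I; Complex.I, 0], !![1, 0; 0, -1]]

/-- `Ω⁺ = σ1⊗σ1 + σ2⊗σ2 + σ3⊗σ3`. -/
def OmegaPlus : Matrix (Fin 2 × Fin 2) (Fin 2 × Fin 2) ℂ :=
  pauli 0 ⊗ₖ pauli 0 + pauli 1 ⊗ₖ pauli 1 + pauli 2 ⊗ₖ pauli 2

/-!
Conjugation by the involution `R ⊗ R` maps `𝟙⊗τ + τ⊗𝟙` to `𝟙⊗(RτR) + (RτR)⊗𝟙` and fixes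
`Ω⁺ = 2·SWAP - 𝟙`; together with the fact that rescaling by `μ ≠ 0` changes neither the commutant
nor the span, this reduces the claim to `σ = σ3`. There `𝟙⊗σ3 + σ3⊗𝟙 = diag(2, 0, 0, -2)`, so its
commutant consists of the matrices that are block diagonal for the eigenspaces, a space of
dimension `1 + 4 + 1 = 6`, and the six generators are read off from the entries of such a matrix.
-/

theorem Matrix.commute_diagonal_iff {n α : Type*} [Fintype n] [DecidableEq n] [CommRing α]
    [NoZeroDivisors α] {X : Matrix n n α} {d : n → α} :
    Commute X (diagonal d) ↔ ∀ i j, d i ≠ d j → X i j = 0 := by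
  refine ⟨fun h i j hij => ?_, fun h => ?_⟩
  · have hij' : (d j - d i) * X i j = 0 := by
      have := congr_fun (congr_fun h i) j
      simp only [mul_diagonal, diagonal_mul] at this
      linear_combination this
    exact (mul_eq_zero.mp hij').resolve_left (sub_ne_zero.mpr hij.symm)
  · ext i j
    simp only [mul_diagonal, diagonal_mul]
    by_cases hij : d i = d j
    · rw [hij, mul_comm]
    · simp [h i j hij]

def kroneckerSum {n α : Type*} [DecidableEq n] [NonAssocSemiring α] (M : Matrix n n α) :
    Matrix (n × n) (n × n) α :=
  1 ⊗ₖ M + M ⊗ₖ 1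

theorem kroneckerSum_diagonal {n α : Type*} [DecidableEq n] [Semiring α] (d : n → α) :
    kroneckerSum (diagonal d) = diagonal fun p => d p.1 + d p.2 := by
  rw [kroneckerSum, ← diagonal_one, diagonal_kronecker_diagonal, diagonal_kronecker_diagonal,
    diagonal_add]
  simp [add_comm]

theorem kroneckerSum_smul {n α : Type*} [DecidableEq n] [CommSemiring α] (c : α)
    (M : Matrix n n α) : kroneckerSum (c • M) = c • kroneckerSum M := by
  rw [kroneckerSum, kroneckerSum, kronecker_smul, smul_kronecker, smul_add]

theorem kroneckerSum_conj {n α : Type*} [Fintype n] [DecidableEq n] [CommSemiring α]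
    {R : Matrix n n α} (hR : R * R = 1) (M : Matrix n n α) :
    (R ⊗ₖ R) * kroneckerSum M * (R ⊗ₖ R) = kroneckerSum (R * M * R) := by
  rw [kroneckerSum, mul_add, add_mul, ← mul_kronecker_mul, ← mul_kronecker_mul,
    ← mul_kronecker_mul, ← mul_kronecker_mul, mul_one, hR, kroneckerSum]

theorem mul_mul_mul_mul_of_mul_self_eq_one {M : Type*} [Monoid M] {t : M} (ht : t * t = 1)
    (x : M) : t * (t * x * t) * t = x := by
  simp only [← mul_assoc, ht, one_mul]
  rw [mul_assoc, ht, mul_one]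

theorem commute_mul_mul_iff_of_mul_self_eq_one {M : Type*} [Monoid M] {t : M} (ht : t * t = 1)
    {a b : M} : Commute a (t * b * t) ↔ Commute (t * a * t) b := by
  have hconj {x y : M} (h : Commute x y) : Commute (t * x * t) (t * y * t) := by
    have hmul (u v : M) : t * u * t * (t * v * t) = t * (u * v) * t := by
      simp only [mul_assoc]
      rw [← mul_assoc t t, ht, one_mul]
    rw [commute_iff_eq, hmul, hmul, h.eq]
  exact ⟨fun h => mul_mul_mul_mul_of_mul_self_eq_one ht b ▸ hconj h,
    fun h => mul_mul_mul_mul_of_mul_self_eq_one ht a ▸ hconj h⟩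

theorem Submodule.mem_span_image_iff_of_involutive {R M : Type*} [Semiring R] [AddCommMonoid M]
    [Module R M] {f : M →ₗ[R] M} (hf : Function.Involutive f) {s : Set M} {x : M} :
    x ∈ span R (f '' s) ↔ f x ∈ span R s := by
  rw [← map_span]
  constructor
  · rintro ⟨y, hy, rfl⟩
    rwa [hf y]
  · intro h
    rw [← hf x]
    exact mem_map_of_mem h

theorem pauli_two_eq_diagonal : pauli 2 = diagonal ![1, -1] := by
  ext i j
  fin_cases i <;> fin_cases j <;> simp [pauli]

theorem kroneckerSum_pauli_two :
    kroneckerSum (pauli 2) = diagonal fun p => ![(1 : ℂ), -1] p.1 + ![1, -1] p.2 := by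
  rw [pauli_two_eq_diagonal, kroneckerSum_diagonal]

def commutantGens (τ : Matrix (Fin 2) (Fin 2) ℂ) (B : Matrix (Fin 2 × Fin 2) (Fin 2 × Fin 2) ℂ) :
    Set (Matrix (Fin 2 × Fin 2) (Fin 2 × Fin 2) ℂ) :=
  {1 ⊗ₖ 1, 1 ⊗ₖ τ, τ ⊗ₖ 1, τ ⊗ₖ τ, OmegaPlus, B}

theorem commute_kroneckerSum_pauli_two_of_mem_commutantGens
    {B : Matrix (Fin 2 × Fin 2) (Fin 2 × Fin 2) ℂ}
    (hB : B ∈ commutantGens (pauli 2) (pauli 0 ⊗ₖ pauli 1 - pauli 1 ⊗ₖ pauli 0)) :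
    Commute B (kroneckerSum (pauli 2)) := by
  rw [kroneckerSum_pauli_two, commute_diagonal_iff]
  rintro ⟨i, j⟩ ⟨k, l⟩ hne
  simp only [commutantGens, Set.mem_insert_iff, Set.mem_singleton_iff] at hB
  rcases hB with rfl | rfl | rfl | rfl | rfl | rfl <;>
    fin_cases i <;> fin_cases j <;> fin_cases k <;> fin_cases l <;>
    simp [OmegaPlus, pauli, one_apply] at hne ⊢

theorem mem_span_commutantGens_of_commute {X : Matrix (Fin 2 × Fin 2) (Fin 2 × Fin 2) ℂ}
    (hX : Commute X (kroneckerSum (pauli 2))) :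
    X ∈ Submodule.span ℂ (commutantGens (pauli 2) (pauli 0 ⊗ₖ pauli 1 - pauli 1 ⊗ₖ pauli 0)) := by
  rw [kroneckerSum_pauli_two, commute_diagonal_iff] at hX
  set a := X (0, 0) (0, 0)
  set b := X (0, 1) (0, 1)
  set c := X (1, 0) (1, 0)
  set d := X (1, 1) (1, 1)
  set e := X (0, 1) (1, 0)
  set f := X (1, 0) (0, 1)
  -- `e` and `f` are reached only by `Ω⁺` (entries `2, 2`) and `σ1⊗σ2 - σ2⊗σ1` (entries `2i, -2i`)
  have hX : X = (4 : ℂ)⁻¹ • ((a + b + c + d) • (1 ⊗ₖ 1) + (a - b + c - d) • (1 ⊗ₖ pauli 2)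
      + (a + b - c - d) • (pauli 2 ⊗ₖ 1) + (a - b - c + d - e - f) • (pauli 2 ⊗ₖ pauli 2)
      + (e + f) • OmegaPlus - (I * (e - f)) • (pauli 0 ⊗ₖ pauli 1 - pauli 1 ⊗ₖ pauli 0)) := by
    ext ⟨i, j⟩ ⟨k, l⟩
    have hv := hX (i, j) (k, l)
    fin_cases i <;> fin_cases j <;> fin_cases k <;> fin_cases l <;>
      norm_num [OmegaPlus, pauli, one_apply, cons_val_two, vecHead, vecTail, a, b, c, d, e, f]
        at hv ⊢ <;>
      first | exact hv | ring1 | (ring_nf; rw [I_sq]; ring1)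
  rw [hX]
  refine Submodule.smul_mem _ _
    (sub_mem (add_mem (add_mem (add_mem (add_mem ?_ ?_) ?_) ?_) ?_) ?_) <;>
    exact Submodule.smul_mem _ _ (Submodule.subset_span (by simp [commutantGens]))

theorem commute_kroneckerSum_pauli_two_iff {X : Matrix (Fin 2 × Fin 2) (Fin 2 × Fin 2) ℂ} :
    Commute X (kroneckerSum (pauli 2)) ↔
      X ∈ Submodule.span ℂ (commutantGens (pauli 2) (pauli 0 ⊗ₖ pauli 1 - pauli 1 ⊗ₖ pauli 0)) := by
  refine ⟨mem_span_commutantGens_of_commute, fun hX => ?_⟩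
  induction hX using Submodule.span_induction with
  | mem B hB => exact commute_kroneckerSum_pauli_two_of_mem_commutantGens hB
  | zero => exact Commute.zero_left _
  | add Y Z _ _ hY hZ => exact hY.add_left hZ
  | smul c Y _ hY => exact hY.smul_left c

-- `Ω⁺ = 2·SWAP - 𝟙`, and `SWAP` commutes with every `R ⊗ R`.
theorem kronecker_self_commute_OmegaPlus (R : Matrix (Fin 2) (Fin 2) ℂ) :
    Commute (R ⊗ₖ R) OmegaPlus := by
  rw [commute_iff_eq]
  ext ⟨i, j⟩ ⟨k, l⟩
  fin_cases i <;> fin_cases j <;> fin_cases k <;> fin_cases l <;>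
    simp [OmegaPlus, pauli, mul_apply, Fintype.sum_prod_type, Fin.sum_univ_succ, cons_val_two,
      vecHead, vecTail] <;> ring

theorem image_commutantGens_conj {R : Matrix (Fin 2) (Fin 2) ℂ} (hR : R * R = 1)
    (τ : Matrix (Fin 2) (Fin 2) ℂ) (B : Matrix (Fin 2 × Fin 2) (Fin 2 × Fin 2) ℂ) :
    LinearMap.mulLeftRight ℂ (R ⊗ₖ R, R ⊗ₖ R) '' commutantGens τ B =
      commutantGens (R * τ * R) ((R ⊗ₖ R) * B * (R ⊗ₖ R)) := by
  have hT : (R ⊗ₖ R) * (R ⊗ₖ R) = 1 := by rw [← mul_kronecker_mul, hR, one_kronecker_one]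
  have hΩ : (R ⊗ₖ R) * OmegaPlus * (R ⊗ₖ R) = OmegaPlus := by
    rw [(kronecker_self_commute_OmegaPlus R).eq, mul_assoc, hT, mul_one]
  simp only [commutantGens, Set.image_insert_eq, Set.image_singleton,
    LinearMap.mulLeftRight_apply, ← mul_kronecker_mul, mul_one, hR, hΩ]

theorem span_commutantGens_smul {c : ℂ} (hc : c ≠ 0) (τ : Matrix (Fin 2) (Fin 2) ℂ)
    (B : Matrix (Fin 2 × Fin 2) (Fin 2 × Fin 2) ℂ) :
    Submodule.span ℂ (commutantGens (c • τ) B) = Submodule.span ℂ (commutantGens τ B) := by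
  simp only [commutantGens, Submodule.span_insert, kronecker_smul, smul_kronecker, smul_smul,
    Submodule.span_singleton_smul_eq hc.isUnit,
    Submodule.span_singleton_smul_eq (hc.isUnit.mul hc.isUnit)]

theorem commutant_symmetric_V_general
    (R : Matrix (Fin 2) (Fin 2) ℂ) (hR : R * R = 1)
    (μ : ℂ) (hμ : μ ≠ 0)
    (σ : Matrix (Fin 2) (Fin 2) ℂ) (hσ : σ = μ • (R * pauli 2 * R)) :
    {X : Matrix (Fin 2 × Fin 2) (Fin 2 × Fin 2) ℂ |
        X * ((1 : Matrix (Fin 2) (Fin 2) ℂ) ⊗ₖ σ + σ ⊗ₖ (1 : Matrix (Fin 2) (Fin 2) ℂ))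
          = ((1 : Matrix (Fin 2) (Fin 2) ℂ) ⊗ₖ σ + σ ⊗ₖ (1 : Matrix (Fin 2) (Fin 2) ℂ)) * X}
      = (Submodule.span ℂ
          {(1 : Matrix (Fin 2) (Fin 2) ℂ) ⊗ₖ (1 : Matrix (Fin 2) (Fin 2) ℂ),
            (1 : Matrix (Fin 2) (Fin 2) ℂ) ⊗ₖ σ,
            σ ⊗ₖ (1 : Matrix (Fin 2) (Fin 2) ℂ),
            σ ⊗ₖ σ,
            OmegaPlus,
            (R ⊗ₖ R) * (pauli 0 ⊗ₖ pauli 1 - pauli 1 ⊗ₖ pauli 0) * (R ⊗ₖ R)}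
          : Set (Matrix (Fin 2 × Fin 2) (Fin 2 × Fin 2) ℂ)) := by
  have hT : (R ⊗ₖ R) * (R ⊗ₖ R) = 1 := by rw [← mul_kronecker_mul, hR, one_kronecker_one]
  have hconj : Function.Involutive (LinearMap.mulLeftRight ℂ (R ⊗ₖ R, R ⊗ₖ R)) :=
    mul_mul_mul_mul_of_mul_self_eq_one hT
  ext X
  change Commute X (kroneckerSum σ) ↔ X ∈ Submodule.span ℂ
    (commutantGens σ ((R ⊗ₖ R) * (pauli 0 ⊗ₖ pauli 1 - pauli 1 ⊗ₖ pauli 0) * (R ⊗ₖ R)))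
  rw [hσ, kroneckerSum_smul, Commute.smul_right_iff₀ hμ, ← kroneckerSum_conj hR,
    commute_mul_mul_iff_of_mul_self_eq_one hT, span_commutantGens_smul hμ,
    ← image_commutantGens_conj hR, Submodule.mem_span_image_iff_of_involutive hconj]
  exact commute_kroneckerSum_pauli_two_iff

/-- for `σ = μ • R σ3 R` with `R` an invertible involution and `μ ≠ 0`, the
commutant of `𝟙⊗σ + σ⊗𝟙` is the span of the six matrices
`𝟙⊗𝟙, 𝟙⊗σ, σ⊗𝟙, σ⊗σ, Ω⁺, (R⊗R)(σ1⊗σ2 - σ2⊗σ1)(R⊗R)`. -/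
theorem commutant_symmetric_V
    (R : Matrix (Fin 2) (Fin 2) ℂ) (hR_unit : IsUnit R) (hR : R * R = 1)
    (μ : ℂ) (hμ : μ ≠ 0)
    (σ : Matrix (Fin 2) (Fin 2) ℂ) (hσ : σ = μ • (R * pauli 2 * R)) :
    {X : Matrix (Fin 2 × Fin 2) (Fin 2 × Fin 2) ℂ |
        X * ((1 : Matrix (Fin 2) (Fin 2) ℂ) ⊗ₖ σ + σ ⊗ₖ (1 : Matrix (Fin 2) (Fin 2) ℂ))
          = ((1 : Matrix (Fin 2) (Fin 2) ℂ) ⊗ₖ σ + σ ⊗ₖ (1 : Matrix (Fin 2) (Fin 2) ℂ)) * X}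
      = (Submodule.span ℂ
          {(1 : Matrix (Fin 2) (Fin 2) ℂ) ⊗ₖ (1 : Matrix (Fin 2) (Fin 2) ℂ),
            (1 : Matrix (Fin 2) (Fin 2) ℂ) ⊗ₖ σ,
            σ ⊗ₖ (1 : Matrix (Fin 2) (Fin 2) ℂ),
            σ ⊗ₖ σ,
            OmegaPlus,
            (R ⊗ₖ R) * (pauli 0 ⊗ₖ pauli 1 - pauli 1 ⊗ₖ pauli 0) * (R ⊗ₖ R)}
          : Set (Matrix (Fin 2 × Fin 2) (Fin 2 × Fin 2) ℂ)) :=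
  commutant_symmetric_V_general R hR μ hμ σ hσ

end
end

section
/- Let R be an invertible 2×2 complex matrix with R·R = 𝟙, let μ ∈ ℂ with μ ≠ 0, set σ = μ · R σ3 R and Δ⁻ = (R⊗R)(σ1⊗σ2 − σ2⊗σ1)(R⊗R), and let M be the complex linear span of the six matrices 𝟙⊗𝟙, 𝟙⊗σ, σ⊗𝟙, σ⊗σ, Ω⁺, Δ⁻. Then the commutant of M (the set of 4×4 matrices commuting with every element of M, equivalently with each of the six spanning matrices) equals the complex linear span of 𝟙⊗𝟙, σ⊗σ, and 𝟙⊗σ + σ⊗𝟙; moreover this commutant is contained in M, so that M ∩ M′ = M′. -/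
open Matrix Complex
open scoped Kronecker

noncomputable section

section ConjInvolution

variable (k : Type*) {A : Type*} [CommSemiring k] [Semiring A] [Algebra k A]

def conjInvolution (Q : A) (hQ : Q * Q = 1) : A ≃ₐ[k] A :=
  MulSemiringAction.toAlgEquiv k A (ConjAct.toConjAct (⟨Q, Q, hQ, hQ⟩ : Aˣ))

variable {k} {Q : A}

theorem conjInvolution_apply (hQ : Q * Q = 1) (X : A) : conjInvolution k Q hQ X = Q * X * Q :=
  rfl

theorem conjInvolution_conjInvolution (hQ : Q * Q = 1) (X : A) :
    conjInvolution k Q hQ (conjInvolution k Q hQ X) = X := by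
  simp only [conjInvolution_apply, mul_assoc, hQ, mul_one]
  rw [← mul_assoc, hQ, one_mul]

theorem conjInvolution_eq_self_of_commute (hQ : Q * Q = 1) {P : A} (h : Commute Q P) :
    conjInvolution k Q hQ P = P := by
  rw [conjInvolution_apply, h.eq, mul_assoc, hQ, mul_one]

end ConjInvolution

theorem Commute.kronecker {l m α : Type*} [Fintype l] [Fintype m] [CommSemiring α]
    {A C : Matrix l l α} {B D : Matrix m m α} (hAC : Commute A C) (hBD : Commute B D) :
    Commute (A ⊗ₖ B) (C ⊗ₖ D) := by
  simp only [Commute, SemiconjBy, ← mul_kronecker_mul, hAC.eq, hBD.eq]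

section Kronecker

variable {n α : Type*} [Fintype n] [DecidableEq n] [CommSemiring α]

variable (n α) in
def swapMatrix : Matrix (n × n) (n × n) α :=
  (Equiv.prodComm n n).toPEquiv.toMatrix

theorem swapMatrix_mul_kronecker (A B : Matrix n n α) :
    swapMatrix n α * (A ⊗ₖ B) = (B ⊗ₖ A) * swapMatrix n α := by
  ext i j
  simp [swapMatrix, PEquiv.toMatrix_toPEquiv_mul, PEquiv.mul_toMatrix_toPEquiv, mul_comm]

theorem commute_swapMatrix_kronecker_self (A : Matrix n n α) :
    Commute (swapMatrix n α) (A ⊗ₖ A) :=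
  swapMatrix_mul_kronecker A A

theorem commute_swapMatrix_kronecker_add_kronecker (A B : Matrix n n α) :
    Commute (swapMatrix n α) (A ⊗ₖ B + B ⊗ₖ A) := by
  simp only [Commute, SemiconjBy, mul_add, add_mul, swapMatrix_mul_kronecker, add_comm]

theorem apply_swap_eq_of_commute_swapMatrix {x : n × n → α}
    (h : Commute (diagonal x) (swapMatrix n α)) (i : n × n) : x i.swap = x i := by
  simpa [swapMatrix, PEquiv.toMatrix_toPEquiv_mul, PEquiv.mul_toMatrix_toPEquiv] using
    (congrFun (congrFun h.eq i) i.swap).symm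

theorem kronecker_self_mul_self_eq_one {R : Matrix n n α} (hR : R * R = 1) :
    (R ⊗ₖ R) * (R ⊗ₖ R) = 1 := by
  rw [← mul_kronecker_mul, hR, one_kronecker_one]

theorem conjInvolution_kronecker {R : Matrix n n α} (hR : R * R = 1) (A B : Matrix n n α) :
    conjInvolution α (R ⊗ₖ R) (kronecker_self_mul_self_eq_one hR) (A ⊗ₖ B)
      = (R * A * R) ⊗ₖ (R * B * R) := by
  rw [conjInvolution_apply, mul_kronecker_mul, mul_kronecker_mul]

theorem conjInvolution_swapMatrix {R : Matrix n n α} (hR : R * R = 1) :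
    conjInvolution α (R ⊗ₖ R) (kronecker_self_mul_self_eq_one hR) (swapMatrix n α)
      = swapMatrix n α :=
  conjInvolution_eq_self_of_commute _ (commute_swapMatrix_kronecker_self R).symm

def symmKroneckerSpan (σ : Matrix n n α) : Submodule α (Matrix (n × n) (n × n) α) :=
  Submodule.span α {1 ⊗ₖ 1, σ ⊗ₖ σ, 1 ⊗ₖ σ + σ ⊗ₖ 1}

def kroneckerGenerators (σ : Matrix n n α) : Set (Matrix (n × n) (n × n) α) :=
  {1 ⊗ₖ σ, σ ⊗ₖ 1, swapMatrix n α}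

theorem commute_of_mem_symmKroneckerSpan {σ : Matrix n n α} {X : Matrix (n × n) (n × n) α}
    (hX : X ∈ symmKroneckerSpan σ) : ∀ s ∈ kroneckerGenerators σ, Commute X s := by
  have hσ : Commute σ σ := Commute.refl σ
  have h1 : Commute (1 : Matrix n n α) σ := Commute.one_left σ
  refine fun s hs => (Algebra.commute_of_mem_adjoin_of_forall_mem_commute
    (Algebra.span_le_adjoin α _ hX) fun z hz => ?_).symm
  simp only [kroneckerGenerators, Set.mem_insert_iff, Set.mem_singleton_iff] at hs hz
  rcases hz with rfl | rfl | rfl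
  · rw [one_kronecker_one]; exact Commute.one_right s
  · rcases hs with rfl | rfl | rfl
    · exact h1.kronecker hσ
    · exact hσ.kronecker h1
    · exact commute_swapMatrix_kronecker_self σ
  · rcases hs with rfl | rfl | rfl
    · exact ((Commute.refl 1).kronecker hσ).add_right (h1.kronecker h1.symm)
    · exact (h1.symm.kronecker h1).add_right (hσ.kronecker (Commute.refl 1))
    · exact commute_swapMatrix_kronecker_add_kronecker 1 σ

end Kronecker

section Diagonal

variable {K : Type*} [Field K]

theorem isDiag_of_commute_diagonal_kronecker {n : Type*} [Fintype n] [DecidableEq n]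
    {t : n → K} (ht : Function.Injective t) {X : Matrix (n × n) (n × n) K}
    (h₁ : Commute X (diagonal t ⊗ₖ 1)) (h₂ : Commute X (1 ⊗ₖ diagonal t)) :
    X.IsDiag := by
  have entry : ∀ {d : n × n → K}, Commute X (diagonal d) → ∀ i j, (d i - d j) * X i j = 0 :=
    fun {d} h i j => by
      have := congrFun (congrFun h.eq i) j
      rw [mul_diagonal, diagonal_mul] at this
      linear_combination -this
  rw [← diagonal_one, diagonal_kronecker_diagonal] at h₁ h₂
  intro i j hij
  obtain hne | hne : i.1 ≠ j.1 ∨ i.2 ≠ j.2 := by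
    rw [← not_and_or]; exact fun h => hij (Prod.ext h.1 h.2)
  · simpa [sub_eq_zero, ht.ne hne] using entry h₁ i j
  · simpa [sub_eq_zero, ht.ne hne] using entry h₂ i j

theorem exists_symmetric_interpolation {t : Fin 2 → K} (ht : t 0 ≠ t 1)
    {x : Fin 2 × Fin 2 → K} (hx : x (0, 1) = x (1, 0)) :
    ∃ a b c : K, ∀ i, x i = a + b * (t i.1 * t i.2) + c * (t i.1 + t i.2) := by
  have hδ : t 0 - t 1 ≠ 0 := sub_ne_zero.mpr ht
  -- `x (0,0) - x (0,1) = (t 0 - t 1) (b t 0 + c)` and `x (0,1) - x (1,1) = (t 0 - t 1) (b t 1 + c)`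
  set b := (x (0, 0) - 2 * x (0, 1) + x (1, 1)) / (t 0 - t 1) ^ 2
  set c := (x (0, 0) - x (0, 1)) / (t 0 - t 1) - b * t 0
  refine ⟨x (0, 0) - b * t 0 ^ 2 - 2 * c * t 0, b, c, ?_⟩
  simp only [Prod.forall, Fin.forall_fin_two, ← hx, b, c]
  refine ⟨⟨?_, ?_⟩, ?_, ?_⟩ <;> field_simp <;> ring

theorem mem_symmKroneckerSpan_diagonal_of_commute {t : Fin 2 → K} (ht : Function.Injective t)
    {Y : Matrix (Fin 2 × Fin 2) (Fin 2 × Fin 2) K}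
    (h : ∀ s ∈ kroneckerGenerators (diagonal t), Commute Y s) :
    Y ∈ symmKroneckerSpan (diagonal t) := by
  simp only [kroneckerGenerators, Set.mem_insert_iff, Set.mem_singleton_iff, forall_eq_or_imp,
    forall_eq] at h
  obtain ⟨h₁, h₂, hP⟩ := h
  have hdiag := (isDiag_of_commute_diagonal_kronecker ht h₂ h₁).diagonal_diag
  rw [← hdiag] at hP
  obtain ⟨a, b, c, habc⟩ := exists_symmetric_interpolation (ht.ne (by decide))
    (apply_swap_eq_of_commute_swapMatrix hP (1, 0))
  refine Submodule.mem_span_triple.mpr ⟨a, b, c, ?_⟩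
  rw [← hdiag]
  simp only [← diagonal_one, diagonal_kronecker_diagonal, ← diagonal_smul, diagonal_add]
  congr 1
  funext i
  rw [habc i]
  simp only [Pi.smul_apply, smul_eq_mul, one_mul, mul_one]
  ring

theorem mem_symmKroneckerSpan_of_commute {R σ : Matrix (Fin 2) (Fin 2) K} (hR : R * R = 1)
    {t : Fin 2 → K} (ht : Function.Injective t) (hσ : R * σ * R = diagonal t)
    {X : Matrix (Fin 2 × Fin 2) (Fin 2 × Fin 2) K}
    (h : ∀ s ∈ kroneckerGenerators σ, Commute X s) : X ∈ symmKroneckerSpan σ := by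
  set ψ := conjInvolution K (R ⊗ₖ R) (kronecker_self_mul_self_eq_one hR)
  have hψψ : ∀ Y, ψ (ψ Y) = Y := conjInvolution_conjInvolution _
  have hR1 : R * 1 * R = 1 := by rw [mul_one, hR]
  have hσ' : R * diagonal t * R = σ := by
    rw [← hσ, ← mul_assoc, ← mul_assoc, hR, one_mul, mul_assoc, hR, mul_one]
  have hY : ψ X ∈ symmKroneckerSpan (diagonal t) := by
    have hmap : ∀ s ∈ kroneckerGenerators σ, Commute (ψ X) (ψ s) :=
      fun s hs => (h s hs).map ψ
    simp only [kroneckerGenerators, Set.mem_insert_iff, Set.mem_singleton_iff, forall_eq_or_imp,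
      forall_eq, ψ, conjInvolution_kronecker hR, conjInvolution_swapMatrix hR, hR1, hσ] at hmap
    exact mem_symmKroneckerSpan_diagonal_of_commute ht
      (by simpa [kroneckerGenerators] using hmap)
  obtain ⟨a, b, c, habc⟩ := Submodule.mem_span_triple.mp hY
  refine Submodule.mem_span_triple.mpr ⟨a, b, c, ?_⟩
  rw [← hψψ X, ← habc]
  simp only [map_add, map_smul, ψ, conjInvolution_kronecker hR, hR1, hσ']

end Diagonal

theorem OmegaPlus_eq_two_smul_swapMatrix_sub_one :
    OmegaPlus = (2 : ℂ) • swapMatrix (Fin 2) ℂ - 1 := by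
  ext ⟨i, j⟩ ⟨k, l⟩
  fin_cases i <;> fin_cases j <;> fin_cases k <;> fin_cases l <;>
    simp [OmegaPlus, pauli, swapMatrix, one_apply] <;> ring_nf

theorem kronecker_pauli_sub_eq_smul_swapMatrix_mul :
    pauli 0 ⊗ₖ pauli 1 - pauli 1 ⊗ₖ pauli 0
      = I • (swapMatrix (Fin 2) ℂ * (1 ⊗ₖ pauli 2 - pauli 2 ⊗ₖ 1)) := by
  rw [swapMatrix, PEquiv.toMatrix_toPEquiv_mul]
  ext ⟨i, j⟩ ⟨k, l⟩
  fin_cases i <;> fin_cases j <;> fin_cases k <;> fin_cases l <;>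
    simp [pauli, one_apply] <;> ring

theorem swapMatrix_mem_adjoin_OmegaPlus :
    swapMatrix (Fin 2) ℂ ∈ Algebra.adjoin ℂ {OmegaPlus} := by
  have h : swapMatrix (Fin 2) ℂ = (2⁻¹ : ℂ) • (OmegaPlus + 1) := by
    rw [OmegaPlus_eq_two_smul_swapMatrix_sub_one, sub_add_cancel, smul_smul,
      inv_mul_cancel₀ two_ne_zero, one_smul]
  rw [h]
  exact Subalgebra.smul_mem _ (add_mem (Algebra.self_mem_adjoin_singleton ℂ _) (one_mem _)) _

section PauliFrame

variable {R σ : Matrix (Fin 2) (Fin 2) ℂ} {μ : ℂ}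

theorem conj_eq_diagonal_of_eq_smul_conj_pauli (hR : R * R = 1)
    (hσ : σ = μ • (R * pauli 2 * R)) : R * σ * R = diagonal ![μ, -μ] := by
  rw [hσ, mul_smul_comm, smul_mul_assoc, ← mul_assoc, ← mul_assoc, hR, one_mul, mul_assoc, hR,
    mul_one, pauli_two_eq_diagonal, ← diagonal_smul]
  simp

theorem conj_kronecker_pauli_sub_eq (hR : R * R = 1) (hμ : μ ≠ 0)
    (hσ : σ = μ • (R * pauli 2 * R)) :
    (R ⊗ₖ R) * (pauli 0 ⊗ₖ pauli 1 - pauli 1 ⊗ₖ pauli 0) * (R ⊗ₖ R)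
      = (I * μ⁻¹) • (swapMatrix (Fin 2) ℂ * (1 ⊗ₖ σ - σ ⊗ₖ 1)) := by
  have hp : R * pauli 2 * R = μ⁻¹ • σ := by rw [hσ, smul_smul, inv_mul_cancel₀ hμ, one_smul]
  have hR1 : R * 1 * R = 1 := by rw [mul_one, hR]
  rw [← conjInvolution_apply (k := ℂ) (kronecker_self_mul_self_eq_one hR),
    kronecker_pauli_sub_eq_smul_swapMatrix_mul, map_smul, map_mul, map_sub,
    conjInvolution_swapMatrix hR, conjInvolution_kronecker hR, conjInvolution_kronecker hR, hp,
    hR1, kronecker_smul, smul_kronecker, ← smul_sub, mul_smul_comm, smul_smul]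

theorem forall_mem_span_commute_iff (hR : R * R = 1) (hμ : μ ≠ 0)
    (hσ : σ = μ • (R * pauli 2 * R)) (X : Matrix (Fin 2 × Fin 2) (Fin 2 × Fin 2) ℂ) :
    (∀ Y ∈ Submodule.span ℂ {1 ⊗ₖ 1, 1 ⊗ₖ σ, σ ⊗ₖ 1, σ ⊗ₖ σ, OmegaPlus,
        (R ⊗ₖ R) * (pauli 0 ⊗ₖ pauli 1 - pauli 1 ⊗ₖ pauli 0) * (R ⊗ₖ R)}, Commute X Y)
      ↔ ∀ s ∈ kroneckerGenerators σ, Commute X s := by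
  set gens := kroneckerGenerators σ
  have h1σ : 1 ⊗ₖ σ ∈ Algebra.adjoin ℂ gens :=
    Algebra.subset_adjoin (by simp [gens, kroneckerGenerators])
  have hσ1 : σ ⊗ₖ 1 ∈ Algebra.adjoin ℂ gens :=
    Algebra.subset_adjoin (by simp [gens, kroneckerGenerators])
  have hP : swapMatrix (Fin 2) ℂ ∈ Algebra.adjoin ℂ gens :=
    Algebra.subset_adjoin (by simp [gens, kroneckerGenerators])
  have hspan_le : Submodule.span ℂ {1 ⊗ₖ 1, 1 ⊗ₖ σ, σ ⊗ₖ 1, σ ⊗ₖ σ, OmegaPlus,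
      (R ⊗ₖ R) * (pauli 0 ⊗ₖ pauli 1 - pauli 1 ⊗ₖ pauli 0) * (R ⊗ₖ R)}
      ≤ Subalgebra.toSubmodule (Algebra.adjoin ℂ gens) := by
    rw [Submodule.span_le]
    rintro Y (rfl | rfl | rfl | rfl | rfl | rfl) <;>
      rw [SetLike.mem_coe, Subalgebra.mem_toSubmodule]
    · rw [one_kronecker_one]; exact one_mem _
    · exact h1σ
    · exact hσ1
    · simpa [← mul_kronecker_mul] using mul_mem hσ1 h1σ
    · rw [OmegaPlus_eq_two_smul_swapMatrix_sub_one]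
      exact sub_mem (Subalgebra.smul_mem _ hP _) (one_mem _)
    · rw [conj_kronecker_pauli_sub_eq hR hμ hσ]
      exact Subalgebra.smul_mem _ (mul_mem hP (sub_mem h1σ hσ1)) _
  refine ⟨fun h s hs => ?_, fun h Y hY =>
    Algebra.commute_of_mem_adjoin_of_forall_mem_commute (hspan_le hY) h⟩
  simp only [gens, kroneckerGenerators, Set.mem_insert_iff, Set.mem_singleton_iff] at hs
  rcases hs with rfl | rfl | rfl
  · exact h _ (Submodule.subset_span (by simp))
  · exact h _ (Submodule.subset_span (by simp))
  · exact Algebra.commute_of_mem_adjoin_singleton_of_commute swapMatrix_mem_adjoin_OmegaPlus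
      (h _ (Submodule.subset_span (by simp)))

end PauliFrame

theorem commutant_of_M_case1_general
    (R : Matrix (Fin 2) (Fin 2) ℂ) (hR : R * R = 1)
    (μ : ℂ) (hμ : μ ≠ 0)
    (σ : Matrix (Fin 2) (Fin 2) ℂ) (hσ : σ = μ • (R * pauli 2 * R))
    (Δ : Matrix (Fin 2 × Fin 2) (Fin 2 × Fin 2) ℂ)
    (hΔ : Δ = (R ⊗ₖ R) * (pauli 0 ⊗ₖ pauli 1 - pauli 1 ⊗ₖ pauli 0) * (R ⊗ₖ R))
    (M : Submodule ℂ (Matrix (Fin 2 × Fin 2) (Fin 2 × Fin 2) ℂ))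
    (hM : M = Submodule.span ℂ
        {(1 : Matrix (Fin 2) (Fin 2) ℂ) ⊗ₖ (1 : Matrix (Fin 2) (Fin 2) ℂ),
          (1 : Matrix (Fin 2) (Fin 2) ℂ) ⊗ₖ σ,
          σ ⊗ₖ (1 : Matrix (Fin 2) (Fin 2) ℂ),
          σ ⊗ₖ σ, OmegaPlus, Δ}) :
    {X : Matrix (Fin 2 × Fin 2) (Fin 2 × Fin 2) ℂ | ∀ Y ∈ M, X * Y = Y * X}
      = (Submodule.span ℂ
          {(1 : Matrix (Fin 2) (Fin 2) ℂ) ⊗ₖ (1 : Matrix (Fin 2) (Fin 2) ℂ),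
            σ ⊗ₖ σ,
            (1 : Matrix (Fin 2) (Fin 2) ℂ) ⊗ₖ σ + σ ⊗ₖ (1 : Matrix (Fin 2) (Fin 2) ℂ)}
          : Set (Matrix (Fin 2 × Fin 2) (Fin 2 × Fin 2) ℂ))
    ∧ {X : Matrix (Fin 2 × Fin 2) (Fin 2 × Fin 2) ℂ | ∀ Y ∈ M, X * Y = Y * X}
        ⊆ (M : Set (Matrix (Fin 2 × Fin 2) (Fin 2 × Fin 2) ℂ)) := by
  have ht : Function.Injective ![μ, -μ] := by
    intro i j h
    fin_cases i <;> fin_cases j <;>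
      simp_all [CharZero.eq_neg_self_iff, CharZero.neg_eq_self_iff]
  have hcommutant : ∀ X, (∀ Y ∈ M, X * Y = Y * X) ↔ X ∈ symmKroneckerSpan σ := fun X => by
    rw [hM, hΔ]
    exact (forall_mem_span_commute_iff hR hμ hσ X).trans
      ⟨mem_symmKroneckerSpan_of_commute hR ht (conj_eq_diagonal_of_eq_smul_conj_pauli hR hσ),
        commute_of_mem_symmKroneckerSpan⟩
  have hle : symmKroneckerSpan σ ≤ M := by
    rw [hM, symmKroneckerSpan, Submodule.span_le]
    rintro Y (rfl | rfl | rfl)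
    · exact Submodule.subset_span (by simp)
    · exact Submodule.subset_span (by simp)
    · exact add_mem (Submodule.subset_span (by simp)) (Submodule.subset_span (by simp))
  exact ⟨Set.ext hcommutant, fun X hX => hle ((hcommutant X).mp hX)⟩

/-- Case 1: for `σ = μ • R σ3 R` and
`M = span{𝟙⊗𝟙, 𝟙⊗σ, σ⊗𝟙, σ⊗σ, Ω⁺, Δ⁻}`, the commutant of `M` equals
`span{𝟙⊗𝟙, σ⊗σ, 𝟙⊗σ + σ⊗𝟙}`, and this commutant is contained in `M`
(so `Z = M ∩ M' = M'`). -/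
theorem commutant_of_M_case1
    (R : Matrix (Fin 2) (Fin 2) ℂ) (hR_unit : IsUnit R) (hR : R * R = 1)
    (μ : ℂ) (hμ : μ ≠ 0)
    (σ : Matrix (Fin 2) (Fin 2) ℂ) (hσ : σ = μ • (R * pauli 2 * R))
    (Δ : Matrix (Fin 2 × Fin 2) (Fin 2 × Fin 2) ℂ)
    (hΔ : Δ = (R ⊗ₖ R) * (pauli 0 ⊗ₖ pauli 1 - pauli 1 ⊗ₖ pauli 0) * (R ⊗ₖ R))
    (M : Submodule ℂ (Matrix (Fin 2 × Fin 2) (Fin 2 × Fin 2) ℂ))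
    (hM : M = Submodule.span ℂ
        {(1 : Matrix (Fin 2) (Fin 2) ℂ) ⊗ₖ (1 : Matrix (Fin 2) (Fin 2) ℂ),
          (1 : Matrix (Fin 2) (Fin 2) ℂ) ⊗ₖ σ,
          σ ⊗ₖ (1 : Matrix (Fin 2) (Fin 2) ℂ),
          σ ⊗ₖ σ, OmegaPlus, Δ}) :
    {X : Matrix (Fin 2 × Fin 2) (Fin 2 × Fin 2) ℂ | ∀ Y ∈ M, X * Y = Y * X}
      = (Submodule.span ℂ
          {(1 : Matrix (Fin 2) (Fin 2) ℂ) ⊗ₖ (1 : Matrix (Fin 2) (Fin 2) ℂ),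
            σ ⊗ₖ σ,
            (1 : Matrix (Fin 2) (Fin 2) ℂ) ⊗ₖ σ + σ ⊗ₖ (1 : Matrix (Fin 2) (Fin 2) ℂ)}
          : Set (Matrix (Fin 2 × Fin 2) (Fin 2 × Fin 2) ℂ))
    ∧ {X : Matrix (Fin 2 × Fin 2) (Fin 2 × Fin 2) ℂ | ∀ Y ∈ M, X * Y = Y * X}
        ⊆ (M : Set (Matrix (Fin 2 × Fin 2) (Fin 2 × Fin 2) ℂ)) :=
  commutant_of_M_case1_general R hR μ hμ σ hσ Δ hΔ M hM

end
end

section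
/- Let σ and τ be Hermitian, traceless 2×2 complex matrices that are linearly independent over ℂ. Then the set of 4×4 complex matrices commuting with both 𝟙⊗σ + σ⊗𝟙 and 𝟙⊗τ + τ⊗𝟙 equals the complex linear span of 𝟙⊗𝟙 and Ω⁺. -/
/-!
The map `A ↦ 1 ⊗ A + A ⊗ 1` is a Lie algebra homomorphism, so a matrix commuting with its values
at `σ` and `τ` commutes with its values on the Lie algebra generated by `σ` and `τ`. For linearly
independent traceless Hermitian `σ, τ` the commutator `C = ⁅σ, τ⁆` is nonzero and skew-Hermitian,
so `tr (C * C) ≠ 0`, and then `σ, τ, C` span `𝔰𝔩₂(ℂ)`. Hence `X` commutes with the images of all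
Pauli matrices, and commuting with those of `σ₁` and `σ₃` already forces `X ∈ span {𝟙 ⊗ 𝟙, Ω⁺}`.
Conversely `Ω⁺ = 2 P - 1` for the swap `P`, which commutes with every `1 ⊗ A + A ⊗ 1`.
-/

open Matrix Complex
open scoped Kronecker

noncomputable section

attribute [local instance] LieRing.ofAssociativeRing

namespace Matrix

variable {R : Type*} [CommRing R]

section Kronecker

variable {l m n p : Type*}

theorem sub_kronecker (A B : Matrix l m R) (C : Matrix n p R) :
    (A - B) ⊗ₖ C = A ⊗ₖ C - B ⊗ₖ C := by
  ext; simp [sub_mul]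

theorem kronecker_sub (A : Matrix l m R) (B C : Matrix n p R) :
    A ⊗ₖ (B - C) = A ⊗ₖ B - A ⊗ₖ C := by
  ext; simp [mul_sub]

variable [Fintype n] [DecidableEq n]

def kroneckerSumSelf : Matrix n n R →ₗ⁅R⁆ Matrix (n × n) (n × n) R where
  toFun A := 1 ⊗ₖ A + A ⊗ₖ 1
  map_add' A B := by simp only [kronecker_add, add_kronecker]; abel
  map_smul' c A := by simp only [kronecker_smul, smul_kronecker, smul_add, RingHom.id_apply]
  map_lie' {A B} := by
    simp only [Ring.lie_def, add_mul, mul_add, ← mul_kronecker_mul, Matrix.one_mul,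
      Matrix.mul_one, sub_kronecker, kronecker_sub]
    abel

theorem kroneckerSumSelf_apply (A : Matrix n n R) : kroneckerSumSelf A = 1 ⊗ₖ A + A ⊗ₖ 1 := rfl

theorem commute_kroneckerSumSelf_of_mem_span {X : Matrix (n × n) (n × n) R} {A B M : Matrix n n R}
    (hA : Commute X (kroneckerSumSelf A)) (hB : Commute X (kroneckerSumSelf B))
    (hM : M ∈ Submodule.span R {A, B, ⁅A, B⁆}) : Commute X (kroneckerSumSelf M) := by
  let P : Submodule R (Matrix n n R) :=
    (Subalgebra.centralizer R {X}).toSubmodule.comap kroneckerSumSelf.toLinearMap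
  have hP (C : Matrix n n R) : C ∈ P ↔ Commute X (kroneckerSumSelf C) := by
    simp [P, Subalgebra.mem_centralizer_iff, Commute, SemiconjBy]
  have hAB : Commute X (kroneckerSumSelf ⁅A, B⁆) := by
    rw [LieHom.map_lie, Ring.lie_def]
    exact (hA.mul_right hB).sub_right (hB.mul_right hA)
  refine (hP M).1 (Submodule.span_le.2 ?_ hM)
  rintro C (rfl | rfl | rfl) <;> simp only [SetLike.mem_coe, hP, hA, hB, hAB]

end Kronecker

section FinTwo

open scoped ComplexOrder

theorem exists_eq_of_trace_eq_zero {A : Matrix (Fin 2) (Fin 2) R} (hA : A.trace = 0) :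
    ∃ a b c, A = !![a, b; c, -a] := by
  refine ⟨A 0 0, A 0 1, A 1 0, ?_⟩
  rw [trace_fin_two] at hA
  ext i j
  fin_cases i <;> fin_cases j <;> simp [eq_neg_of_add_eq_zero_right hA]

/-- Cramer's rule in `𝔰𝔩₂`: `⁅B, C⁆`, `⁅C, A⁆`, `C` with `C = ⁅A, B⁆` are, up to the factor
`tr (C * C) = tr (A * ⁅B, C⁆)`, the basis dual to `A, B, C` for the trace form. -/
theorem trace_lie_mul_self_smul {A B M : Matrix (Fin 2) (Fin 2) R}
    (hA : A.trace = 0) (hB : B.trace = 0) (hM : M.trace = 0) :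
    (⁅A, B⁆ * ⁅A, B⁆).trace • M = (M * ⁅B, ⁅A, B⁆⁆).trace • A
      + (M * ⁅⁅A, B⁆, A⁆).trace • B + (M * ⁅A, B⁆).trace • ⁅A, B⁆ := by
  obtain ⟨a, b, c, rfl⟩ := exists_eq_of_trace_eq_zero hA
  obtain ⟨a', b', c', rfl⟩ := exists_eq_of_trace_eq_zero hB
  obtain ⟨x, y, z, rfl⟩ := exists_eq_of_trace_eq_zero hM
  ext i j
  fin_cases i <;> fin_cases j <;> simp [Ring.lie_def, trace_fin_two] <;> ring

theorem mul_lie_self_left {A B : Matrix (Fin 2) (Fin 2) R} (hA : A.trace = 0) (hB : B.trace = 0) :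
    A * ⁅A, B⁆ = (A * A).trace • B - (A * B).trace • A := by
  obtain ⟨a, b, c, rfl⟩ := exists_eq_of_trace_eq_zero hA
  obtain ⟨a', b', c', rfl⟩ := exists_eq_of_trace_eq_zero hB
  ext i j
  fin_cases i <;> fin_cases j <;> simp [Ring.lie_def, trace_fin_two] <;> ring

theorem mem_span_lie_of_trace_eq_zero {K : Type*} [Field K] {A B M : Matrix (Fin 2) (Fin 2) K}
    (hA : A.trace = 0) (hB : B.trace = 0) (hM : M.trace = 0)
    (hAB : (⁅A, B⁆ * ⁅A, B⁆).trace ≠ 0) : M ∈ Submodule.span K {A, B, ⁅A, B⁆} := by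
  refine (Submodule.smul_mem_iff _ hAB).1 ?_
  rw [trace_lie_mul_self_smul hA hB hM]
  refine add_mem (add_mem ?_ ?_) ?_ <;> refine Submodule.smul_mem _ _ (Submodule.subset_span ?_) <;>
    simp

theorem lie_ne_zero_of_linearIndependent {A B : Matrix (Fin 2) (Fin 2) ℂ} (hA : A.IsHermitian)
    (hA₀ : A.trace = 0) (hB₀ : B.trace = 0) (hAB : LinearIndependent ℂ ![A, B]) : ⁅A, B⁆ ≠ 0 := by
  intro h
  have hAA : (A * A).trace ≠ 0 := by
    have := (trace_conjTranspose_mul_self_eq_zero_iff (A := A)).not.2 (hAB.ne_zero 0)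
    rwa [hA.eq] at this
  have hdep : (-(A * B).trace) • A + (A * A).trace • B = 0 := by
    rw [neg_smul, neg_add_eq_sub, ← mul_lie_self_left hA₀ hB₀, h, Matrix.mul_zero]
  exact hAA (LinearIndependent.pair_iff.1 hAB _ _ hdep).2

theorem trace_lie_mul_self_ne_zero {A B : Matrix (Fin 2) (Fin 2) ℂ} (hA : A.IsHermitian)
    (hB : B.IsHermitian) (hA₀ : A.trace = 0) (hB₀ : B.trace = 0)
    (hAB : LinearIndependent ℂ ![A, B]) : (⁅A, B⁆ * ⁅A, B⁆).trace ≠ 0 := by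
  have hskew : ⁅A, B⁆ᴴ = -⁅A, B⁆ := by
    simp [Ring.lie_def, conjTranspose_sub, conjTranspose_mul, hA.eq, hB.eq]
  rw [← neg_ne_zero, ← trace_neg, ← Matrix.neg_mul, ← hskew]
  exact trace_conjTranspose_mul_self_eq_zero_iff.not.2 (lie_ne_zero_of_linearIndependent hA hA₀ hB₀ hAB)

end FinTwo

end Matrix

theorem trace_pauli (k : Fin 3) : (pauli k).trace = 0 := by
  fin_cases k <;> simp [pauli, trace_fin_two]

theorem commute_omegaPlus_kroneckerSumSelf (A : Matrix (Fin 2) (Fin 2) ℂ) :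
    Commute OmegaPlus (kroneckerSumSelf A) := by
  ext ⟨i, j⟩ ⟨k, l⟩
  fin_cases i <;> fin_cases j <;> fin_cases k <;> fin_cases l <;>
    simp [OmegaPlus, kroneckerSumSelf_apply, pauli, mul_apply, one_apply, Fintype.sum_prod_type] <;>
    ring

/-- `kroneckerSumSelf (pauli 2)` is `diag(2, 0, 0, -2)`, so commuting with it makes `X` block
diagonal on its eigenspaces; commuting with `kroneckerSumSelf (pauli 0)` then links the blocks. -/
theorem exists_eq_of_commute_kroneckerSumSelf_pauli {X : Matrix (Fin 2 × Fin 2) (Fin 2 × Fin 2) ℂ}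
    (h₁ : Commute X (kroneckerSumSelf (pauli 0))) (h₃ : Commute X (kroneckerSumSelf (pauli 2))) :
    ∃ a b : ℂ, a • (1 ⊗ₖ 1) + b • OmegaPlus = X := by
  have e₁ (p q : Fin 2 × Fin 2) := congrFun₂ h₁.eq p q
  have e₃ (p q : Fin 2 × Fin 2) := congrFun₂ h₃.eq p q
  have z01 := e₃ (0,0) (0,1); have z02 := e₃ (0,0) (1,0); have z03 := e₃ (0,0) (1,1)
  have z10 := e₃ (0,1) (0,0); have z20 := e₃ (1,0) (0,0); have z30 := e₃ (1,1) (0,0)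
  have z13 := e₃ (0,1) (1,1); have z23 := e₃ (1,0) (1,1)
  have z31 := e₃ (1,1) (0,1); have z32 := e₃ (1,1) (1,0)
  have t2 := e₁ (0,0) (0,1); have t3 := e₁ (0,1) (0,0)
  have e20 := e₁ (1,0) (0,0); have e13 := e₁ (0,1) (1,1)
  simp [kroneckerSumSelf_apply, pauli, mul_apply, one_apply, Fintype.sum_prod_type]
    at z01 z02 z03 z10 z20 z30 z13 z23 z31 z32 t2 t3 e20 e13
  refine ⟨X (0,1) (0,1) + X (0,1) (1,0) / 2, X (0,1) (1,0) / 2, ?_⟩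
  ext ⟨i, j⟩ ⟨k, l⟩
  fin_cases i <;> fin_cases j <;> fin_cases k <;> fin_cases l <;>
    simp [OmegaPlus, pauli, one_apply, Prod.ext_iff]
  · linear_combination z30/4 + t3
  · linear_combination -z01
  · linear_combination -z02
  · linear_combination z03/4
  · linear_combination -z10
  · linear_combination -z13
  · linear_combination -z20
  · linear_combination t2 + t3 + z03/4 + z30/4
  · linear_combination -e20 - t2 - z03/4 - z30/4
  · linear_combination -z23
  · linear_combination -z30/4
  · linear_combination -z31
  · linear_combination -z32
  · linear_combination e13 - z03/4

/-- for Hermitian traceless linearly independent `σ, τ`, the joint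
commutant of `𝟙⊗σ + σ⊗𝟙` and `𝟙⊗τ + τ⊗𝟙` is the span of `𝟙⊗𝟙` and `Ω⁺`. -/
theorem joint_commutant_two_hermitian
    (σ τ : Matrix (Fin 2) (Fin 2) ℂ)
    (hσ_herm : σᴴ = σ) (hτ_herm : τᴴ = τ)
    (hσ_tr : σ.trace = 0) (hτ_tr : τ.trace = 0)
    (hind : LinearIndependent ℂ ![σ, τ]) :
    {X : Matrix (Fin 2 × Fin 2) (Fin 2 × Fin 2) ℂ |
        X * ((1 : Matrix (Fin 2) (Fin 2) ℂ) ⊗ₖ σ + σ ⊗ₖ (1 : Matrix (Fin 2) (Fin 2) ℂ))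
          = ((1 : Matrix (Fin 2) (Fin 2) ℂ) ⊗ₖ σ + σ ⊗ₖ (1 : Matrix (Fin 2) (Fin 2) ℂ)) * X
        ∧ X * ((1 : Matrix (Fin 2) (Fin 2) ℂ) ⊗ₖ τ + τ ⊗ₖ (1 : Matrix (Fin 2) (Fin 2) ℂ))
          = ((1 : Matrix (Fin 2) (Fin 2) ℂ) ⊗ₖ τ + τ ⊗ₖ (1 : Matrix (Fin 2) (Fin 2) ℂ)) * X}
      = (Submodule.span ℂ
          {(1 : Matrix (Fin 2) (Fin 2) ℂ) ⊗ₖ (1 : Matrix (Fin 2) (Fin 2) ℂ), OmegaPlus}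
          : Set (Matrix (Fin 2 × Fin 2) (Fin 2 × Fin 2) ℂ)) := by
  ext X
  simp only [Set.mem_ofPred_eq, SetLike.mem_coe, Submodule.mem_span_pair]
  constructor
  · rintro ⟨hσX, hτX⟩
    have hστ := trace_lie_mul_self_ne_zero hσ_herm hτ_herm hσ_tr hτ_tr hind
    have hpauli (k : Fin 3) : Commute X (kroneckerSumSelf (pauli k)) :=
      commute_kroneckerSumSelf_of_mem_span hσX hτX
        (mem_span_lie_of_trace_eq_zero hσ_tr hτ_tr (trace_pauli k) hστ)
    exact exists_eq_of_commute_kroneckerSumSelf_pauli (hpauli 0) (hpauli 2)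
  · rintro ⟨a, b, rfl⟩
    have hcomm (A : Matrix (Fin 2) (Fin 2) ℂ) :
        Commute (a • (1 ⊗ₖ 1) + b • OmegaPlus) (kroneckerSumSelf A) := by
      rw [one_kronecker_one]
      exact ((Commute.one_left _).smul_left a).add_left
        ((commute_omegaPlus_kroneckerSumSelf A).smul_left b)
    exact ⟨hcomm σ, hcomm τ⟩

end
end

section
/- Let R be an invertible 2×2 complex matrix with R·R = 𝟙, let μ ∈ ℂ with μ ≠ 0, and set σ = μ · R σ3 R. Then the set M of 4×4 complex matrices commuting with both 𝟙⊗σ + σ⊗𝟙 and 𝟙⊗σ − σ⊗𝟙 equals the complex linear span of 𝟙⊗𝟙, 𝟙⊗σ, σ⊗𝟙, σ⊗σ, which equals the complex linear span of the four matrices P_j = (R⊗R) Π_j (R⊗R), j = 1, …, 4, where Π_j are the four diagonal matrix units of M₄(ℂ); moreover M is a commutative set (any two of its elements commute), so that Z = M in Frigerio's notation. -/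
/-!
Conjugation by the involution `S = R ⊗ R` is an algebra automorphism sending `1 ⊗ σ₃` and
`σ₃ ⊗ 1` to `μ⁻¹ (1 ⊗ σ)` and `μ⁻¹ (σ ⊗ 1)`. Commuting with `a + b` and `a - b` is the same as
commuting with `a` and `b`, so `M` is the `S`-conjugate of the joint commutant of the diagonal
matrices `1 ⊗ σ₃ = diag (1, -1, 1, -1)` and `σ₃ ⊗ 1 = diag (1, 1, -1, -1)`. Their diagonals
separate the four basis vectors, so this commutant is the commutative algebra of diagonal matrices,
spanned by the `Π_j` and also by `1 ⊗ 1, 1 ⊗ σ₃, σ₃ ⊗ 1, σ₃ ⊗ σ₃`, because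
`Π_(i,j) = ½ (1 ± σ₃) ⊗ ½ (1 ± σ₃)`.
-/

open Matrix Complex
open scoped Kronecker

noncomputable section

/-- The diagonal matrix units `Π_p` of `M₄(ℂ)` indexed by `Fin 2 × Fin 2`. -/
def diagUnit (p : Fin 2 × Fin 2) : Matrix (Fin 2 × Fin 2) (Fin 2 × Fin 2) ℂ :=
  Matrix.single p p 1

section Conjugation

variable (K : Type*) {A : Type*} [CommSemiring K] [Semiring A] [Algebra K A]

def conjByInvolution (S : A) (hS : S * S = 1) : A ≃ₐ[K] A :=
  MulSemiringAction.toAlgEquiv K A (ConjAct.toConjAct (⟨S, S, hS, hS⟩ : Aˣ))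

variable {K}

theorem conjByInvolution_apply {S : A} (hS : S * S = 1) (X : A) :
    conjByInvolution K S hS X = S * X * S :=
  rfl

theorem conjByInvolution_involutive {S : A} (hS : S * S = 1) :
    Function.Involutive (conjByInvolution K S hS) := by
  intro X
  rw [conjByInvolution_apply, conjByInvolution_apply, ← mul_assoc, ← mul_assoc, hS, one_mul,
    mul_assoc, hS, mul_one]

theorem commute_conjByInvolution_iff {S : A} (hS : S * S = 1) {X B : A} :
    Commute X (conjByInvolution K S hS B) ↔ Commute (conjByInvolution K S hS X) B := by
  conv_rhs => rw [← conjByInvolution_involutive (K := K) hS B]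
  exact (commute_map_iff (conjByInvolution K S hS).injective).symm

end Conjugation

theorem AlgEquiv.image_span {K A B : Type*} [CommSemiring K] [Semiring A] [Semiring B]
    [Algebra K A] [Algebra K B] (e : A ≃ₐ[K] B) (s : Set A) :
    e '' (Submodule.span K s : Set A) = Submodule.span K (e '' s) :=
  (Submodule.map_coe e.toLinearMap _).symm.trans (congrArg _ (Submodule.map_span _ s))

theorem commute_add_and_commute_sub_iff {K A : Type*} [Field K] [NeZero (2 : K)] [Ring A]
    [Algebra K A] {x a b : A} :
    Commute x (a + b) ∧ Commute x (a - b) ↔ Commute x a ∧ Commute x b := by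
  refine ⟨fun ⟨hp, hm⟩ => ⟨?_, ?_⟩, fun ⟨ha, hb⟩ => ⟨ha.add_right hb, ha.sub_right hb⟩⟩
  · have ha : a = (2⁻¹ : K) • (a + b + (a - b)) := by
      rw [add_add_sub_cancel, ← two_smul K, smul_smul, inv_mul_cancel₀ two_ne_zero, one_smul]
    rw [ha]
    exact (hp.add_right hm).smul_right _
  · have hb : b = (2⁻¹ : K) • (a + b - (a - b)) := by
      rw [add_sub_sub_cancel, ← two_smul K, smul_smul, inv_mul_cancel₀ two_ne_zero, one_smul]
    rw [hb]
    exact (hp.sub_right hm).smul_right _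

namespace Matrix

variable {n α : Type*}

theorem commute_diagonal_iff_s14 [Fintype n] [DecidableEq n] [CommRing α] [NoZeroDivisors α]
    {X : Matrix n n α} {d : n → α} :
    Commute X (diagonal d) ↔ ∀ i j, d i ≠ d j → X i j = 0 := by
  simp only [commute_iff_eq, ← Matrix.ext_iff, mul_diagonal, diagonal_mul]
  refine forall₂_congr fun i j => ?_
  rw [mul_comm, ← sub_eq_zero, ← sub_mul, mul_eq_zero, sub_eq_zero, eq_comm, or_iff_not_imp_left]

theorem IsDiag.commute [Fintype n] [DecidableEq n] [CommSemiring α] {X Y : Matrix n n α}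
    (hX : X.IsDiag) (hY : Y.IsDiag) : Commute X Y := by
  rw [← hX.diagonal_diag, ← hY.diagonal_diag]
  exact commute_diagonal _ _

theorem isDiag_iff_commute_diagonal [Fintype n] [DecidableEq n] [CommRing α] [NoZeroDivisors α]
    {X : Matrix n n α} {d₁ d₂ : n → α} (hd : Function.Injective fun i => (d₁ i, d₂ i)) :
    X.IsDiag ↔ Commute X (diagonal d₁) ∧ Commute X (diagonal d₂) := by
  refine ⟨fun hX => ⟨hX.commute (isDiag_diagonal _), hX.commute (isDiag_diagonal _)⟩,
    fun ⟨h₁, h₂⟩ i j hij => ?_⟩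
  rw [commute_diagonal_iff_s14] at h₁ h₂
  by_cases hd₁ : d₁ i = d₁ j
  · exact h₂ i j fun hd₂ => hij (hd (Prod.ext hd₁ hd₂))
  · exact h₁ i j hd₁

theorem isDiag_iff_mem_span_single [Fintype n] [DecidableEq n] [CommSemiring α]
    {X : Matrix n n α} :
    X.IsDiag ↔ X ∈ Submodule.span α (Set.range fun i => single i i (1 : α)) := by
  simp only [Submodule.mem_span_range_iff_exists_fun, smul_single, smul_eq_mul, mul_one,
    sum_single_eq_diagonal]
  exact ⟨fun h => ⟨X.diag, h.diagonal_diag⟩, fun ⟨c, hc⟩ => hc ▸ isDiag_diagonal c⟩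

theorem kronecker_self_mul_self [Fintype n] [DecidableEq n] [CommSemiring α] {R : Matrix n n α}
    (hR : R * R = 1) : (R ⊗ₖ R) * (R ⊗ₖ R) = 1 := by
  rw [← mul_kronecker_mul, hR, one_kronecker_one]

theorem span_kronecker_smul [DecidableEq n] [Field α] {μ : α} (hμ : μ ≠ 0) (ρ : Matrix n n α) :
    Submodule.span α {1 ⊗ₖ 1, 1 ⊗ₖ (μ • ρ), (μ • ρ) ⊗ₖ 1, (μ • ρ) ⊗ₖ (μ • ρ)} =
      Submodule.span α {1 ⊗ₖ 1, 1 ⊗ₖ ρ, ρ ⊗ₖ 1, ρ ⊗ₖ ρ} := by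
  simp only [kronecker_smul, smul_kronecker, smul_smul, Submodule.span_insert,
    Submodule.span_singleton_smul_eq (IsUnit.mk0 _ hμ),
    Submodule.span_singleton_smul_eq (IsUnit.mk0 _ (mul_ne_zero hμ hμ))]

end Matrix

theorem isDiag_iff_commute_pauli_two_kronecker {X : Matrix (Fin 2 × Fin 2) (Fin 2 × Fin 2) ℂ} :
    X.IsDiag ↔ Commute X (1 ⊗ₖ pauli 2) ∧ Commute X (pauli 2 ⊗ₖ 1) := by
  have hv : Function.Injective ![(1 : ℂ), -1] := by
    intro i j h
    fin_cases i <;> fin_cases j <;> first | rfl | norm_num at h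
  rw [pauli_two_eq_diagonal, ← diagonal_one, diagonal_kronecker_diagonal,
    diagonal_kronecker_diagonal]
  simp only [mul_one, one_mul]
  exact isDiag_iff_commute_diagonal ((hv.prodMap hv).comp Prod.swap_injective)

theorem single_eq_smul_one_add_pauli_two (i : Fin 2) :
    single i i (1 : ℂ) = (2 : ℂ)⁻¹ • (1 + ![(1 : ℂ), -1] i • pauli 2) := by
  rw [pauli_two_eq_diagonal]
  ext a b
  fin_cases i <;> fin_cases a <;> fin_cases b <;> norm_num [diagonal]

theorem span_diagUnit_eq_span_pauli_two_kronecker :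
    Submodule.span ℂ (Set.range diagUnit) =
      Submodule.span ℂ {1 ⊗ₖ 1, 1 ⊗ₖ pauli 2, pauli 2 ⊗ₖ 1, pauli 2 ⊗ₖ pauli 2} := by
  apply le_antisymm
  · rw [Submodule.span_le]
    rintro _ ⟨⟨i, j⟩, rfl⟩
    have hkron : diagUnit (i, j) = single i i 1 ⊗ₖ single j j 1 := by
      rw [single_kronecker_single, mul_one]
      rfl
    rw [hkron, single_eq_smul_one_add_pauli_two, single_eq_smul_one_add_pauli_two]
    simp only [SetLike.mem_coe, smul_kronecker, kronecker_smul, add_kronecker, kronecker_add,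
      smul_add]
    repeat' first | apply Submodule.add_mem | apply Submodule.smul_mem
    all_goals exact Submodule.subset_span (by simp)
  · rw [Submodule.span_le]
    intro X hX
    have hτ : (pauli 2).IsDiag := pauli_two_eq_diagonal ▸ isDiag_diagonal _
    rw [SetLike.mem_coe, show diagUnit = fun p => single p p 1 from rfl,
      ← isDiag_iff_mem_span_single]
    simp only [Set.mem_insert_iff, Set.mem_singleton_iff] at hX
    rcases hX with rfl | rfl | rfl | rfl
    exacts [isDiag_one.kronecker isDiag_one, isDiag_one.kronecker hτ, hτ.kronecker isDiag_one,
      hτ.kronecker hτ]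

theorem joint_commutant_case3_general
    (R : Matrix (Fin 2) (Fin 2) ℂ) (hR : R * R = 1)
    (μ : ℂ) (hμ : μ ≠ 0)
    (σ : Matrix (Fin 2) (Fin 2) ℂ) (hσ : σ = μ • (R * pauli 2 * R))
    (M : Set (Matrix (Fin 2 × Fin 2) (Fin 2 × Fin 2) ℂ))
    (hM : M = {X : Matrix (Fin 2 × Fin 2) (Fin 2 × Fin 2) ℂ |
        X * ((1 : Matrix (Fin 2) (Fin 2) ℂ) ⊗ₖ σ + σ ⊗ₖ (1 : Matrix (Fin 2) (Fin 2) ℂ))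
          = ((1 : Matrix (Fin 2) (Fin 2) ℂ) ⊗ₖ σ + σ ⊗ₖ (1 : Matrix (Fin 2) (Fin 2) ℂ)) * X
        ∧ X * ((1 : Matrix (Fin 2) (Fin 2) ℂ) ⊗ₖ σ - σ ⊗ₖ (1 : Matrix (Fin 2) (Fin 2) ℂ))
          = ((1 : Matrix (Fin 2) (Fin 2) ℂ) ⊗ₖ σ - σ ⊗ₖ (1 : Matrix (Fin 2) (Fin 2) ℂ)) * X})
    (P : Fin 2 × Fin 2 → Matrix (Fin 2 × Fin 2) (Fin 2 × Fin 2) ℂ)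
    (hP : ∀ p, P p = (R ⊗ₖ R) * diagUnit p * (R ⊗ₖ R)) :
    M = (Submodule.span ℂ
          {(1 : Matrix (Fin 2) (Fin 2) ℂ) ⊗ₖ (1 : Matrix (Fin 2) (Fin 2) ℂ),
            (1 : Matrix (Fin 2) (Fin 2) ℂ) ⊗ₖ σ,
            σ ⊗ₖ (1 : Matrix (Fin 2) (Fin 2) ℂ),
            σ ⊗ₖ σ}
          : Set (Matrix (Fin 2 × Fin 2) (Fin 2 × Fin 2) ℂ))
    ∧ M = (Submodule.span ℂ (Set.range P)
          : Set (Matrix (Fin 2 × Fin 2) (Fin 2 × Fin 2) ℂ))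
    ∧ (∀ X ∈ M, ∀ Y ∈ M, X * Y = Y * X) := by
  set e := conjByInvolution ℂ (R ⊗ₖ R) (kronecker_self_mul_self hR)
  have he : ∀ A B, e (A ⊗ₖ B) = (R * A * R) ⊗ₖ (R * B * R) := fun A B => by
    rw [conjByInvolution_apply, ← mul_kronecker_mul, ← mul_kronecker_mul]
  have hR1 : R * 1 * R = 1 := by rw [mul_one, hR]
  have hM_diag : M = e '' {X | X.IsDiag} := by
    rw [(conjByInvolution_involutive _).image_eq_preimage_symm, hM, hσ]
    ext X
    change Commute X _ ∧ Commute X _ ↔ _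
    rw [commute_add_and_commute_sub_iff (K := ℂ), kronecker_smul, smul_kronecker,
      Commute.smul_right_iff₀ hμ, Commute.smul_right_iff₀ hμ, ← hR1, ← he, ← he,
      commute_conjByInvolution_iff, commute_conjByInvolution_iff,
      ← isDiag_iff_commute_pauli_two_kronecker]
    rfl
  have hdiag_span : {X : Matrix (Fin 2 × Fin 2) (Fin 2 × Fin 2) ℂ | X.IsDiag} =
      (Submodule.span ℂ (Set.range diagUnit) : Set _) :=
    Set.ext fun _ => isDiag_iff_mem_span_single
  refine ⟨?_, ?_, ?_⟩
  · rw [hM_diag, hdiag_span, span_diagUnit_eq_span_pauli_two_kronecker, e.image_span]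
    simp only [Set.image_insert_eq, Set.image_singleton, he, hR1, hσ, span_kronecker_smul hμ]
  · rw [hM_diag, hdiag_span, e.image_span, ← Set.range_comp, funext hP]
    rfl
  · rw [hM_diag]
    rintro _ ⟨X, hX, rfl⟩ _ ⟨Y, hY, rfl⟩
    exact ((hX.commute hY).map e).eq

/-- Case 3: the joint commutant `M` of `𝟙⊗σ + σ⊗𝟙` and `𝟙⊗σ - σ⊗𝟙` equals
`span{𝟙⊗𝟙, 𝟙⊗σ, σ⊗𝟙, σ⊗σ}`, which equals the span of the four projectors
`P_j = (R⊗R) Π_j (R⊗R)`; moreover `M` is commutative (so `Z = M`). -/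
theorem joint_commutant_case3
    (R : Matrix (Fin 2) (Fin 2) ℂ) (hR_unit : IsUnit R) (hR : R * R = 1)
    (μ : ℂ) (hμ : μ ≠ 0)
    (σ : Matrix (Fin 2) (Fin 2) ℂ) (hσ : σ = μ • (R * pauli 2 * R))
    (M : Set (Matrix (Fin 2 × Fin 2) (Fin 2 × Fin 2) ℂ))
    (hM : M = {X : Matrix (Fin 2 × Fin 2) (Fin 2 × Fin 2) ℂ |
        X * ((1 : Matrix (Fin 2) (Fin 2) ℂ) ⊗ₖ σ + σ ⊗ₖ (1 : Matrix (Fin 2) (Fin 2) ℂ))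
          = ((1 : Matrix (Fin 2) (Fin 2) ℂ) ⊗ₖ σ + σ ⊗ₖ (1 : Matrix (Fin 2) (Fin 2) ℂ)) * X
        ∧ X * ((1 : Matrix (Fin 2) (Fin 2) ℂ) ⊗ₖ σ - σ ⊗ₖ (1 : Matrix (Fin 2) (Fin 2) ℂ))
          = ((1 : Matrix (Fin 2) (Fin 2) ℂ) ⊗ₖ σ - σ ⊗ₖ (1 : Matrix (Fin 2) (Fin 2) ℂ)) * X})
    (P : Fin 2 × Fin 2 → Matrix (Fin 2 × Fin 2) (Fin 2 × Fin 2) ℂ)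
    (hP : ∀ p, P p = (R ⊗ₖ R) * diagUnit p * (R ⊗ₖ R)) :
    M = (Submodule.span ℂ
          {(1 : Matrix (Fin 2) (Fin 2) ℂ) ⊗ₖ (1 : Matrix (Fin 2) (Fin 2) ℂ),
            (1 : Matrix (Fin 2) (Fin 2) ℂ) ⊗ₖ σ,
            σ ⊗ₖ (1 : Matrix (Fin 2) (Fin 2) ℂ),
            σ ⊗ₖ σ}
          : Set (Matrix (Fin 2 × Fin 2) (Fin 2 × Fin 2) ℂ))
    ∧ M = (Submodule.span ℂ (Set.range P)
          : Set (Matrix (Fin 2 × Fin 2) (Fin 2 × Fin 2) ℂ))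
    ∧ (∀ X ∈ M, ∀ Y ∈ M, X * Y = Y * X) :=
  joint_commutant_case3_general R hR μ hμ σ hσ M hM P hP

end
end

section
/- Let R be a 2×2 complex matrix that is unitary and Hermitian (so R = R† = R⁻¹). Define the projectors P_1 = (R⊗R) Π_1 (R⊗R), P_2 = (R⊗R) Π_4 (R⊗R), P_3 = (R⊗R)(Π_2 + Π_3)(R⊗R), where Π_1, Π_2, Π_3, Π_4 are the diagonal matrix units of M₄(ℂ) in the index order (0,0),(0,1),(1,0),(1,1). Then for any 2×2 complex matrices ρ_T, ρ_A, ρ_A′ with Tr ρ_A = Tr ρ_A′ = 1, the partial trace over the second factor satisfies Tr_A[Σ_{n=1}^{3} P_n (ρ_T ⊗ ρ_A) P_n] = Tr_A[Σ_{n=1}^{3} P_n (ρ_T ⊗ ρ_A′) P_n]; that is, the asymptotic reduced state obtained from an uncorrelated initial state ρ_T ⊗ ρ_A does not depend on the ancilla state ρ_A. -/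
/-!
Write `U = R ⊗ R`; since `R² = 1`, `Σₙ Pₙ X Pₙ = U D(U X U) U`, where `D` is the pinching onto
the blocks `{(0,0)}`, `{(1,1)}`, `{(0,1),(1,0)}`. Conjugation by `U` passes through `Tr_A` as
conjugation by `R` (partial trace is cyclic in the traced factor), and `Tr_A ∘ D` keeps exactly the
diagonal of `Tr_A`, because `(0,k)` and `(1,k)` never lie in a common block. So the reduced state is
`R · diag(R (Tr_A X) R) · R`, which depends on `X = ρ_T ⊗ ρ_A` only through
`Tr_A X = (Tr ρ_A) ρ_T = ρ_T`.
-/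

open Matrix Complex
open scoped Kronecker

noncomputable section

/-- Partial trace over the second tensor factor. -/
def ptraceA (M : Matrix (Fin 2 × Fin 2) (Fin 2 × Fin 2) ℂ) : Matrix (Fin 2) (Fin 2) ℂ :=
  Matrix.of fun i j => ∑ k : Fin 2, M (i, k) (j, k)

def dephase (M : Matrix (Fin 2 × Fin 2) (Fin 2 × Fin 2) ℂ) :
    Matrix (Fin 2 × Fin 2) (Fin 2 × Fin 2) ℂ :=
  diagUnit (0, 0) * M * diagUnit (0, 0) + diagUnit (1, 1) * M * diagUnit (1, 1)
    + (diagUnit (0, 1) + diagUnit (1, 0)) * M * (diagUnit (0, 1) + diagUnit (1, 0))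

lemma ptraceA_kronecker (σ τ : Matrix (Fin 2) (Fin 2) ℂ) :
    ptraceA (σ ⊗ₖ τ) = τ.trace • σ := by
  ext i j
  simp only [ptraceA, of_apply, kroneckerMap_apply, Matrix.smul_apply, trace, diag, smul_eq_mul,
    Fin.sum_univ_two]
  ring

lemma ptraceA_kronecker_one_mul_mul (A C : Matrix (Fin 2) (Fin 2) ℂ)
    (M : Matrix (Fin 2 × Fin 2) (Fin 2 × Fin 2) ℂ) :
    ptraceA ((A ⊗ₖ 1) * M * (C ⊗ₖ 1)) = A * ptraceA M * C := by
  ext i j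
  simp only [ptraceA, of_apply, mul_apply, kroneckerMap_apply, one_apply, mul_ite, mul_one,
    mul_zero, ite_mul, zero_mul, Fintype.sum_prod_type, Finset.sum_ite_eq, Finset.sum_ite_eq',
    Finset.mem_univ, ↓reduceIte, Fin.sum_univ_two]
  ring

lemma ptraceA_one_kronecker_mul_comm (B : Matrix (Fin 2) (Fin 2) ℂ)
    (M : Matrix (Fin 2 × Fin 2) (Fin 2 × Fin 2) ℂ) :
    ptraceA ((1 ⊗ₖ B) * M) = ptraceA (M * (1 ⊗ₖ B)) := by
  ext i j
  simp only [ptraceA, of_apply, mul_apply, kroneckerMap_apply, one_apply, ite_mul, one_mul,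
    zero_mul, mul_ite, mul_zero, Fintype.sum_prod_type, Finset.sum_ite_irrel, Finset.sum_const_zero,
    Finset.sum_ite_eq, Finset.sum_ite_eq', Finset.mem_univ, ↓reduceIte, Fin.sum_univ_two]
  ring

lemma ptraceA_kronecker_mul_mul_kronecker (A B C D : Matrix (Fin 2) (Fin 2) ℂ)
    (hDB : D * B = 1) (M : Matrix (Fin 2 × Fin 2) (Fin 2 × Fin 2) ℂ) :
    ptraceA ((A ⊗ₖ B) * M * (C ⊗ₖ D)) = A * ptraceA M * C := by
  have hAB : A ⊗ₖ B = (A ⊗ₖ 1) * (1 ⊗ₖ B) := by rw [← mul_kronecker_mul, mul_one, one_mul]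
  have hCD : C ⊗ₖ D = (1 ⊗ₖ D) * (C ⊗ₖ 1) := by rw [← mul_kronecker_mul, mul_one, one_mul]
  calc ptraceA ((A ⊗ₖ B) * M * (C ⊗ₖ D))
      = ptraceA ((A ⊗ₖ 1) * ((1 ⊗ₖ B) * (M * (1 ⊗ₖ D))) * (C ⊗ₖ 1)) := by
        rw [hAB, hCD]; simp only [Matrix.mul_assoc]
    _ = A * ptraceA ((1 ⊗ₖ B) * (M * (1 ⊗ₖ D))) * C := ptraceA_kronecker_one_mul_mul ..
    _ = A * ptraceA M * C := by
        rw [ptraceA_one_kronecker_mul_comm, Matrix.mul_assoc M, ← mul_kronecker_mul, one_mul, hDB,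
          one_kronecker_one, Matrix.mul_one]

lemma ptraceA_dephase (M : Matrix (Fin 2 × Fin 2) (Fin 2 × Fin 2) ℂ) :
    ptraceA (dephase M) = diagonal fun i => ptraceA M i i := by
  ext i j
  fin_cases i <;> fin_cases j <;>
    simp [ptraceA, dephase, diagUnit, mul_apply, single, Fintype.sum_prod_type, Fin.sum_univ_two]

lemma conj_projector_sum_eq_conj_dephase (U M : Matrix (Fin 2 × Fin 2) (Fin 2 × Fin 2) ℂ) :
    (U * diagUnit (0, 0) * U) * M * (U * diagUnit (0, 0) * U)
      + (U * diagUnit (1, 1) * U) * M * (U * diagUnit (1, 1) * U)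
      + (U * (diagUnit (0, 1) + diagUnit (1, 0)) * U) * M
        * (U * (diagUnit (0, 1) + diagUnit (1, 0)) * U)
      = U * dephase (U * M * U) * U := by
  simp only [dephase, Matrix.mul_add, Matrix.add_mul, Matrix.mul_assoc]

/-- Cases 1 and 3, uncorrelated initial state: for the projectors
`P₁ = (R⊗R)Π₁(R⊗R)`, `P₂ = (R⊗R)Π₄(R⊗R)`, `P₃ = (R⊗R)(Π₂+Π₃)(R⊗R)`, the asymptotic
reduced state `Tr_A[Σₙ Pₙ (ρ_T ⊗ ρ_A) Pₙ]` does not depend on the ancilla state `ρ_A`. -/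
theorem asymptotic_state_independent_of_ancilla
    (R : Matrix (Fin 2) (Fin 2) ℂ) (hR_herm : Rᴴ = R) (hR_unitary : R * Rᴴ = 1)
    (P₁ P₂ P₃ : Matrix (Fin 2 × Fin 2) (Fin 2 × Fin 2) ℂ)
    (hP₁ : P₁ = (R ⊗ₖ R) * diagUnit (0, 0) * (R ⊗ₖ R))
    (hP₂ : P₂ = (R ⊗ₖ R) * diagUnit (1, 1) * (R ⊗ₖ R))
    (hP₃ : P₃ = (R ⊗ₖ R) * (diagUnit (0, 1) + diagUnit (1, 0)) * (R ⊗ₖ R))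
    (ρT ρA ρA' : Matrix (Fin 2) (Fin 2) ℂ)
    (hρA : ρA.trace = 1) (hρA' : ρA'.trace = 1) :
    ptraceA (P₁ * (ρT ⊗ₖ ρA) * P₁ + P₂ * (ρT ⊗ₖ ρA) * P₂ + P₃ * (ρT ⊗ₖ ρA) * P₃)
      = ptraceA (P₁ * (ρT ⊗ₖ ρA') * P₁ + P₂ * (ρT ⊗ₖ ρA') * P₂
          + P₃ * (ρT ⊗ₖ ρA') * P₃) := by
  have hRR : R * R = 1 := by rwa [hR_herm] at hR_unitary
  have reduced_state : ∀ τ : Matrix (Fin 2) (Fin 2) ℂ, τ.trace = 1 →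
      ptraceA (P₁ * (ρT ⊗ₖ τ) * P₁ + P₂ * (ρT ⊗ₖ τ) * P₂ + P₃ * (ρT ⊗ₖ τ) * P₃)
        = R * diagonal (fun i => (R * ρT * R) i i) * R := fun τ hτ => by
    rw [hP₁, hP₂, hP₃, conj_projector_sum_eq_conj_dephase,
      ptraceA_kronecker_mul_mul_kronecker _ _ _ _ hRR, ptraceA_dephase,
      ptraceA_kronecker_mul_mul_kronecker _ _ _ _ hRR, ptraceA_kronecker, hτ, one_smul]
  rw [reduced_state ρA hρA, reduced_state ρA' hρA']

end
end
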